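/- arXiv:math/0404014 — 11 statements merged into one kernel-verified Lean document; each statement's English description precedes it below -/
import Mathlib

section
/- For every family F of finite subsets of ℕ, every infinite subset M of ℕ, and every natural number k, there exists an infinite subset L of M such that either every k-element subset of L belongs to F, or no k-element subset of L belongs to F. -/
/-!
Induction on `k`. For `k + 1`, pick `a₀ ∈ M` and, by the induction hypothesis applied to the
family `{t | insert a₀ t ∈ F}`, an infinite `M₁ ⊆ M` above `a₀` on which membership of
`insert a₀ t` in `F` is the same for all `k`-sets `t`. Iterating yields `a₀ < a₁ < ⋯` and a
decreasing chain `M ⊇ M₁ ⊇ M₂ ⊇ ⋯`, where every `(k + 1)`-subset of `{aₙ}` with least element `aₙ` gets the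
colour attached to `aₙ`. Infinitely many `aₙ` share a colour, and they form `L`.
-/

/-- All `k`-element subsets of `L` lie in `F`, or none does: membership has a common truth value. -/
def IsMonochromatic (F : Set (Finset ℕ)) (k : ℕ) (L : Set ℕ) : Prop :=
  ∃ p : Prop, ∀ s : Finset ℕ, ↑s ⊆ L → s.card = k → (s ∈ F ↔ p)

theorem isMonochromatic_zero (F : Set (Finset ℕ)) (L : Set ℕ) : IsMonochromatic F 0 L :=
  ⟨∅ ∈ F, fun s _ hs => by rw [Finset.card_eq_zero.mp hs]⟩

namespace IsMonochromatic

variable {F : Set (Finset ℕ)} {k : ℕ} {L : Set ℕ}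

theorem forall_mem_or_forall_notMem (h : IsMonochromatic F k L) :
    (∀ s : Finset ℕ, ↑s ⊆ L → s.card = k → s ∈ F) ∨
      (∀ s : Finset ℕ, ↑s ⊆ L → s.card = k → s ∉ F) := by
  obtain ⟨p, hp⟩ := h
  by_cases hp' : p
  · exact .inl fun s hsL hs => (hp s hsL hs).mpr hp'
  · exact .inr fun s hsL hs hsF => hp' ((hp s hsL hs).mp hsF)

end IsMonochromatic

/-- Fusion: iterate `step` along a decreasing chain of infinite sets starting at `M`. -/
theorem exists_strictMono_of_step {P : ℕ → Set ℕ → Prop}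
    (step : ∀ N : Set ℕ, N.Infinite →
      ∃ a ∈ N, ∃ N' ⊆ N, N'.Infinite ∧ (∀ x ∈ N', a < x) ∧ P a N')
    {M : Set ℕ} (hM : M.Infinite) :
    ∃ a : ℕ → ℕ, StrictMono a ∧ (∀ n, a n ∈ M) ∧
      ∀ n, ∃ N, P (a n) N ∧ ∀ m, n < m → a m ∈ N := by
  choose! head hhead tail htail_sub htail_inf hhead_lt hP using step
  set chain : ℕ → Set ℕ := fun n => tail^[n] M
  have chain_succ (n : ℕ) : chain (n + 1) = tail (chain n) :=
    Function.iterate_succ_apply' tail n M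
  have chain_inf (n : ℕ) : (chain n).Infinite := by
    induction n with
    | zero => exact hM
    | succ n ih => rw [chain_succ]; exact htail_inf _ ih
  have chain_anti : Antitone chain := antitone_nat_of_succ_le fun n => by
    rw [chain_succ]; exact htail_sub _ (chain_inf n)
  have head_mem (n : ℕ) : head (chain n) ∈ chain n := hhead _ (chain_inf n)
  refine ⟨fun n => head (chain n), strictMono_nat_of_lt_succ fun n => ?_,
    fun n => chain_anti n.zero_le (head_mem n), fun n => ⟨chain (n + 1), ?_, fun m hnm => ?_⟩⟩
  · exact hhead_lt _ (chain_inf n) _ (chain_succ n ▸ head_mem (n + 1))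
  · rw [chain_succ]; exact hP _ (chain_inf n)
  · exact chain_anti hnm (head_mem m)

theorem exists_infinite_isMonochromatic_insert {F : Set (Finset ℕ)} {k : ℕ}
    (ih : ∀ (G : Set (Finset ℕ)) {N : Set ℕ}, N.Infinite →
      ∃ L ⊆ N, L.Infinite ∧ IsMonochromatic G k L)
    (N : Set ℕ) (hN : N.Infinite) :
    ∃ a ∈ N, ∃ N' ⊆ N, N'.Infinite ∧ (∀ x ∈ N', a < x) ∧
      IsMonochromatic {t | insert a t ∈ F} k N' := by
  obtain ⟨a, ha⟩ := hN.nonempty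
  obtain ⟨L, hL, hLinf, hLmono⟩ :=
    ih {t | insert a t ∈ F} (hN.sdiff (Set.finite_Iic a))
  exact ⟨a, ha, L, hL.trans Set.sdiff_subset, hLinf,
    fun x hx => Set.notMem_Iic.mp (hL hx).2, hLmono⟩

theorem exists_infinite_subset_isMonochromatic (F : Set (Finset ℕ)) (k : ℕ) {M : Set ℕ}
    (hM : M.Infinite) : ∃ L ⊆ M, L.Infinite ∧ IsMonochromatic F k L := by
  induction k generalizing F M with
  | zero => exact ⟨M, subset_rfl, hM, isMonochromatic_zero F M⟩
  | succ k ih =>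
    obtain ⟨a, ha, haM, hext⟩ := exists_strictMono_of_step
      (exists_infinite_isMonochromatic_insert (F := F) ih) hM
    choose N hNmono hN using hext
    choose colour hcolour using hNmono
    obtain ⟨q, hq⟩ := Finite.exists_infinite_fiber colour
    set I := colour ⁻¹' {q}
    refine ⟨a '' I, Set.image_subset_iff.mpr fun n _ => haM n,
      (Set.infinite_coe_iff.mp hq).image ha.injective.injOn, q, fun s hsI hs => ?_⟩
    have hne : s.Nonempty := Finset.card_pos.mp (by omega)
    obtain ⟨n, hnI, han⟩ := hsI (s.min'_mem hne)
    -- `s` is its least element `a n` inserted into a `k`-set of later terms, all lying in `N n`.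
    have hrest : ↑(s.erase (a n)) ⊆ N n := by
      intro x hx
      obtain ⟨hxn, hxs⟩ := Finset.mem_erase.mp hx
      obtain ⟨m, -, rfl⟩ := hsI hxs
      exact hN n m (ha.lt_iff_lt.mp (han ▸ lt_of_le_of_ne (s.min'_le _ hxs) (han ▸ hxn.symm)))
    have hcard : (s.erase (a n)).card = k := by
      rw [Finset.card_erase_of_mem (han ▸ s.min'_mem hne), hs]; rfl
    have hins : insert (a n) (s.erase (a n)) = s :=
      Finset.insert_erase (han ▸ s.min'_mem hne)
    rw [← hins, ← (hnI : colour n = q)]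
    exact hcolour n _ hrest hcard

/-- Ramsey's classical partition theorem: for any family `F` of finite subsets of `ℕ`, any
infinite `M ⊆ ℕ` and any `k`, there is an infinite `L ⊆ M` with either all `k`-element subsets
of `L` in `F` or none of them in `F`. -/
theorem ramsey_classical (F : Set (Finset ℕ)) (M : Set ℕ) (hM : M.Infinite) (k : ℕ) :
    ∃ L ⊆ M, L.Infinite ∧
      ((∀ s : Finset ℕ, ↑s ⊆ L → s.card = k → s ∈ F) ∨
       (∀ s : Finset ℕ, ↑s ⊆ L → s.card = k → s ∉ F)) := by
  obtain ⟨L, hLM, hL, hmono⟩ := exists_infinite_subset_isMonochromatic F k hM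
  exact ⟨L, hLM, hL, hmono.forall_mem_or_forall_notMem⟩
end

section
/- For every family F of finite subsets of ℕ and every infinite subset M of ℕ, there exists an infinite subset L of M such that either A_ω ∩ [L]^{<ω} ⊆ F or A_ω ∩ [L]^{<ω} ⊆ [ℕ]^{<ω} \ F. -/
/-- Fusion lemma: repeatedly shrink an infinite set, recording a chosen element and datum
at each stage. -/
lemma fusion_lemma {α : Type} (Q : ℕ → Set ℕ → α → Prop) (M : Set ℕ) (hM : M.Infinite)
    (step : ∀ N : Set ℕ, N.Infinite → N ⊆ M →
      ∃ (a : ℕ) (N' : Set ℕ) (x : α), a ∈ N ∧ N' ⊆ N ∧ N'.Infinite ∧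
        (∀ y ∈ N', a < y) ∧ Q a N' x) :
    ∃ (a : ℕ → ℕ) (Ms : ℕ → Set ℕ) (x : ℕ → α),
      Ms 0 = M ∧ (∀ i, Ms (i + 1) ⊆ Ms i) ∧ (∀ i, (Ms i).Infinite) ∧
      (∀ i, a i ∈ Ms i) ∧ (∀ i, ∀ y ∈ Ms (i + 1), a i < y) ∧
      (∀ i, Q (a i) (Ms (i + 1)) (x i)) := by
  have key : ∀ s : {N : Set ℕ // N.Infinite ∧ N ⊆ M},
      ∃ p : ℕ × {N : Set ℕ // N.Infinite ∧ N ⊆ M} × α,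
        p.1 ∈ s.1 ∧ p.2.1.1 ⊆ s.1 ∧ (∀ y ∈ p.2.1.1, p.1 < y) ∧ Q p.1 p.2.1.1 p.2.2 := by
    rintro ⟨N, hNi, hNM⟩
    obtain ⟨a, N', x, ha, hsub, hinf, hlt, hQ⟩ := step N hNi hNM
    exact ⟨⟨a, ⟨N', hinf, hsub.trans hNM⟩, x⟩, ha, hsub, hlt, hQ⟩
  choose f h1 h2 h3 h4 using key
  let seq : ℕ → {N : Set ℕ // N.Infinite ∧ N ⊆ M} := fun i =>
    Nat.rec ⟨M, hM, subset_rfl⟩ (fun _ s => (f s).2.1) i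
  exact ⟨fun i => (f (seq i)).1, fun i => (seq i).1, fun i => (f (seq i)).2.2,
    rfl, fun i => h2 (seq i), fun i => (seq i).2.1, fun i => h1 (seq i),
    fun i => h3 (seq i), fun i => h4 (seq i)⟩

lemma pigeon_bool (x : ℕ → Bool) : ∃ b : Bool, {i | x i = b}.Infinite := by
  by_contra h
  push_neg at h
  have h1 : ¬ {i | x i = true}.Infinite := Set.not_infinite.mpr (h true)
  have h2 : ¬ {i | x i = false}.Infinite := Set.not_infinite.mpr (h false)
  rw [Set.not_infinite] at h1 h2
  have : ({i | x i = true} ∪ {i | x i = false}) = Set.univ := by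
    ext i; cases hxi : x i <;> simp [hxi]
  exact Set.infinite_univ (this ▸ h1.union h2)

/-- The infinite Ramsey theorem for `r`-subsets of `ℕ` with two colors. -/
lemma ramsey_bool : ∀ (r : ℕ) (c : Finset ℕ → Bool) (M : Set ℕ), M.Infinite →
    ∃ N ⊆ M, N.Infinite ∧ ∃ b, ∀ s : Finset ℕ, ↑s ⊆ N → s.card = r → c s = b := by
  intro r
  induction r with
  | zero =>
    intro c M hM
    refine ⟨M, subset_rfl, hM, c ∅, fun s _ hs => ?_⟩
    rw [Finset.card_eq_zero.mp hs]
  | succ r ih =>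
    intro c M hM
    have hstep : ∀ N : Set ℕ, N.Infinite → N ⊆ M →
        ∃ (a : ℕ) (N' : Set ℕ) (b : Bool), a ∈ N ∧ N' ⊆ N ∧ N'.Infinite ∧
          (∀ y ∈ N', a < y) ∧
          ∀ t : Finset ℕ, ↑t ⊆ N' → t.card = r → c (insert a t) = b := by
      intro N hNi hNM
      obtain ⟨n, hn⟩ := hNi.nonempty
      have htail : {y ∈ N | n < y}.Infinite := by
        have : {y ∈ N | n < y} = N \ {y | y ≤ n} := by
          ext y; simp [not_le, and_comm]
        rw [this]
        exact hNi.diff (Set.finite_le_nat n)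
      obtain ⟨N', hN'sub, hN'inf, b, hb⟩ := ih (fun t => c (insert n t)) _ htail
      exact ⟨n, N', b, hn, fun y hy => (hN'sub hy).1, hN'inf,
        fun y hy => (hN'sub hy).2, hb⟩
    obtain ⟨a, Ms, x, h0, hsub, hinf, hmem, hlt, hQ⟩ := fusion_lemma (α := Bool)
      (fun a N' b => ∀ t : Finset ℕ, ↑t ⊆ N' → t.card = r → c (insert a t) = b) M hM hstep
    · -- use the fusion data
      have hmono : StrictMono a := strictMono_nat_of_lt_succ fun i => hlt i _ (hmem (i + 1))
      have hchain : ∀ i j, i ≤ j → Ms j ⊆ Ms i := by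
        intro i j h
        induction h with
        | refl => exact subset_rfl
        | step _ ihc => exact fun y hy => ihc (hsub _ hy)
      obtain ⟨b, hI⟩ := pigeon_bool x
      set I := {i | x i = b} with hIdef
      refine ⟨a '' I, ?_, hI.image (hmono.injective.injOn), b, ?_⟩
      · rintro y ⟨i, _, rfl⟩
        have := hchain 0 i (Nat.zero_le i) (hmem i)
        rwa [h0] at this
      · intro s hsN hscard
        have hne : s.Nonempty := Finset.card_pos.mp (by omega)
        obtain ⟨i, hiI, hia⟩ := hsN (s.min'_mem hne)
        have ht : ↑(s.erase (s.min' hne)) ⊆ Ms (i + 1) := by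
          intro y hy
          rcases Finset.mem_erase.mp (Finset.mem_coe.mp hy) with ⟨hyne, hys⟩
          obtain ⟨j, _, hja⟩ := hsN hys
          have hylt : s.min' hne < y :=
            lt_of_le_of_ne (s.min'_le y hys) (Ne.symm hyne)
          have hij : i < j := by
            rw [← hia, ← hja] at hylt
            exact hmono.lt_iff_lt.mp hylt
          rw [← hja]
          exact hchain (i + 1) j hij (hmem j)
        have hcard : (s.erase (s.min' hne)).card = r := by
          rw [Finset.card_erase_of_mem (s.min'_mem hne), hscard]
          omega
        have := hQ i (s.erase (s.min' hne)) ht hcard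
        rw [hia, Finset.insert_erase (s.min'_mem hne)] at this
        rw [this]
        exact hiI

/-- The thin Schreier family `A_ω`: nonempty finite sets whose minimum equals their cardinality. -/
def Aomega : Set (Finset ℕ) := {s | ∃ h : s.Nonempty, s.min' h = s.card}

/-- The extended Ramsey theorem for `ξ = ω`: either `A_ω ∩ [L]^{<ω} ⊆ F` or
`A_ω ∩ [L]^{<ω}` avoids `F`. -/
theorem ramsey_omega (F : Set (Finset ℕ)) (M : Set ℕ) (hM : M.Infinite) :
    ∃ L ⊆ M, L.Infinite ∧
      ((∀ s ∈ Aomega, ↑s ⊆ L → s ∈ F) ∨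
       (∀ s ∈ Aomega, ↑s ⊆ L → s ∉ F)) := by
  classical
  have hstep : ∀ N : Set ℕ, N.Infinite → N ⊆ M →
      ∃ (a : ℕ) (N' : Set ℕ) (b : Bool), a ∈ N ∧ N' ⊆ N ∧ N'.Infinite ∧
        (∀ y ∈ N', a < y) ∧
        ∀ t : Finset ℕ, ↑t ⊆ N' → t.card = a - 1 → (insert a t ∈ F ↔ b = true) := by
    intro N hNi hNM
    obtain ⟨n, hn⟩ := hNi.nonempty
    have htail : {y ∈ N | n < y}.Infinite := by
      have : {y ∈ N | n < y} = N \ {y | y ≤ n} := by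
        ext y; simp [not_le, and_comm]
      rw [this]
      exact hNi.diff (Set.finite_le_nat n)
    obtain ⟨N', hN'sub, hN'inf, b, hb⟩ :=
      ramsey_bool (n - 1) (fun t => decide (insert n t ∈ F)) _ htail
    refine ⟨n, N', b, hn, fun y hy => (hN'sub hy).1, hN'inf,
      fun y hy => (hN'sub hy).2, fun t ht htc => ?_⟩
    have := hb t ht htc
    have := this
    rw [← this]
    simp
  obtain ⟨a, Ms, x, h0, hsub, hinf, hmem, hlt, hQ⟩ := fusion_lemma (α := Bool)
    (fun a N' b => ∀ t : Finset ℕ, ↑t ⊆ N' → t.card = a - 1 → (insert a t ∈ F ↔ b = true))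
    M hM hstep
  · have hmono : StrictMono a := strictMono_nat_of_lt_succ fun i => hlt i _ (hmem (i + 1))
    have hchain : ∀ i j, i ≤ j → Ms j ⊆ Ms i := by
      intro i j h
      induction h with
      | refl => exact subset_rfl
      | step _ ihc => exact fun y hy => ihc (hsub _ hy)
    obtain ⟨b, hI⟩ := pigeon_bool x
    set I := {i | x i = b} with hIdef
    have hLsub : a '' I ⊆ M := by
      rintro y ⟨i, _, rfl⟩
      have := hchain 0 i (Nat.zero_le i) (hmem i)
      rwa [h0] at this
    have key : ∀ s ∈ Aomega, ↑s ⊆ a '' I → (s ∈ F ↔ b = true) := by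
      rintro s ⟨hne, hmin⟩ hsL
      obtain ⟨i, hiI, hia⟩ := hsL (s.min'_mem hne)
      have ht : ↑(s.erase (s.min' hne)) ⊆ Ms (i + 1) := by
        intro y hy
        rcases Finset.mem_erase.mp (Finset.mem_coe.mp hy) with ⟨hyne, hys⟩
        obtain ⟨j, _, hja⟩ := hsL hys
        have hylt : s.min' hne < y :=
          lt_of_le_of_ne (s.min'_le y hys) (Ne.symm hyne)
        have hij : i < j := by
          rw [← hia, ← hja] at hylt
          exact hmono.lt_iff_lt.mp hylt
        rw [← hja]
        exact hchain (i + 1) j hij (hmem j)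
      have hcard : (s.erase (s.min' hne)).card = a i - 1 := by
        rw [Finset.card_erase_of_mem (s.min'_mem hne), ← hmin, hia]
      have := hQ i (s.erase (s.min' hne)) ht hcard
      rw [hia, Finset.insert_erase (s.min'_mem hne)] at this
      have hib : x i = b := hiI
      rw [this, hib]
    refine ⟨a '' I, hLsub, hI.image (hmono.injective.injOn), ?_⟩
    cases b with
    | true => exact Or.inl fun s hs hsL => (key s hs hsL).mpr rfl
    | false => exact Or.inr fun s hs hsL hF => by simpa using (key s hs hsL).mp hF
end

section
/- Let F be a hereditary family of finite subsets of ℕ. Then F is closed in the topology of pointwise convergence if and only if there is no infinite subset M of ℕ with [M]^{<ω} ⊆ F. -/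
/-!
The closure of `charFinset '' F` consists of those `f : ℕ → Bool` all of whose finite
subsets of `{n | f n}` lie in `F`: a basic neighbourhood of `f` only fixes finitely many
coordinates, and `F` is hereditary. So `F` is closed iff every such `f` has finite support,
i.e. iff no infinite `M` has all its finite subsets in `F`.
-/

/-- The characteristic function of a finite set, as an element of `{0,1}^ℕ`. -/
def charFinset (s : Finset ℕ) : ℕ → Bool := fun n => decide (n ∈ s)

section DiscretePi

variable {ι X : Type*} [TopologicalSpace X] [DiscreteTopology X]

theorem mem_closure_iff_forall_finset_eqOn {f : ι → X} {S : Set (ι → X)} :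
    f ∈ closure S ↔ ∀ A : Finset ι, ∃ g ∈ S, Set.EqOn g f A := by
  rw [mem_closure_iff]
  constructor
  · intro h A
    have hopen : IsOpen ((A : Set ι).pi fun i => {f i}) :=
      isOpen_set_pi A.finite_toSet fun _ _ => isOpen_discrete _
    obtain ⟨g, hg, hgS⟩ := h _ hopen fun i _ => rfl
    exact ⟨g, hgS, hg⟩
  · intro h O hO hfO
    obtain ⟨I, u, hu, hIO⟩ := isOpen_pi_iff.mp hO f hfO
    obtain ⟨g, hgS, hgf⟩ := h I
    exact ⟨g, hIO fun i hi => hgf hi ▸ (hu i hi).2, hgS⟩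

end DiscretePi

theorem setOf_charFinset (t : Finset ℕ) : {n | charFinset t n = true} = t := by
  ext n; simp [charFinset]

theorem charFinset_toFinset {f : ℕ → Bool} (hf : {n | f n = true}.Finite) :
    charFinset hf.toFinset = f := by
  funext n; cases hfn : f n <;> simp [charFinset, hfn]

theorem mem_closure_image_charFinset_iff {F : Set (Finset ℕ)}
    (hF : ∀ t ∈ F, ∀ s ⊆ t, s ∈ F) {f : ℕ → Bool} :
    f ∈ closure (charFinset '' F) ↔ ∀ s : Finset ℕ, ↑s ⊆ {n | f n = true} → s ∈ F := by
  simp only [mem_closure_iff_forall_finset_eqOn, Set.exists_mem_image]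
  constructor
  · intro h s hs
    obtain ⟨t, ht, hts⟩ := h s
    refine hF t ht s fun n hn => ?_
    have hfn : f n = true := hs hn
    simpa [charFinset, hfn] using hts hn
  · intro h A
    refine ⟨A.filter (f · = true), h _ fun n hn => (Finset.mem_filter.mp hn).2, fun n hn => ?_⟩
    rw [Finset.mem_coe] at hn
    cases hfn : f n <;> simp [charFinset, hn, hfn]

/-- A hereditary family `F` of finite subsets of `ℕ` is pointwise closed iff there is no
infinite `M ⊆ ℕ` with all finite subsets of `M` in `F`. -/
theorem hereditary_closed_iff (F : Set (Finset ℕ))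
    (hF : ∀ t ∈ F, ∀ s ⊆ t, s ∈ F) :
    IsClosed (charFinset '' F) ↔
      ¬ ∃ M : Set ℕ, M.Infinite ∧ ∀ s : Finset ℕ, ↑s ⊆ M → s ∈ F := by
  classical
  rw [← closure_subset_iff_isClosed]
  constructor
  · rintro hclosed ⟨M, hM, hMF⟩
    have hsupp : {n | decide (n ∈ M) = true} = M := by ext n; simp
    have hχ : (fun n => decide (n ∈ M)) ∈ closure (charFinset '' F) :=
      (mem_closure_image_charFinset_iff hF).mpr (by rwa [hsupp])
    obtain ⟨t, -, ht⟩ := hclosed hχ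
    have hMt : M = t := by rw [← setOf_charFinset t, ht, hsupp]
    exact hM (hMt ▸ t.finite_toSet)
  · intro hno f hf
    have hfF := (mem_closure_image_charFinset_iff hF).mp hf
    have hfin : {n | f n = true}.Finite := by
      by_contra hinf
      exact hno ⟨_, hinf, hfF⟩
    exact ⟨hfin.toFinset, hfF _ (by simp), charFinset_toFinset hfin⟩
end

section
/- Let F be a tree of finite subsets of ℕ, M an infinite subset of ℕ, and k a natural number. Then there exists an infinite subset L of M such that either [L]^k ⊆ F, or F ∩ [L]^{<ω} ⊆ {s : |s| < k}, i.e., every element of F contained in L has fewer than k elements. -/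
/-- `s` is an initial segment of `t`. -/
def InitSeg (s t : Finset ℕ) : Prop :=
  s ⊆ t ∧ ∀ a ∈ s, ∀ b ∈ t, b ∉ s → a < b

/-- `F` is a tree: it contains `∅` and is closed under taking initial segments. -/
def IsTree (F : Set (Finset ℕ)) : Prop :=
  ∅ ∈ F ∧ ∀ t ∈ F, ∀ s : Finset ℕ, InitSeg s t → s ∈ F

/-!
Colour the `k`-subsets of `ℕ` by membership in `F` and apply the infinite Ramsey theorem to get
an infinite `L ⊆ M` on which this colour is constant. If every `k`-subset of `L` lies in `F` we
are done. Otherwise no `s ∈ F` with `s ⊆ L` can have `k` or more elements: its initial segment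
of size `k` would be a `k`-subset of `L` lying in `F`, because `F` is a tree.
-/

section Ramsey

variable {C : Type*}

def MonochromaticOn (c : Finset ℕ → C) (k : ℕ) (L : Set ℕ) (v : C) : Prop :=
  ∀ s : Finset ℕ, ↑s ⊆ L → s.card = k → c s = v

theorem exists_nested_seq {α : Type*} (P : Set α → Set α → Prop)
    (step : ∀ S : Set α, S.Infinite → ∃ T ⊆ S, T.Infinite ∧ P S T)
    {M : Set α} (hM : M.Infinite) :
    ∃ S : ℕ → Set α, S 0 = M ∧ ∀ n, (S n).Infinite ∧ S (n + 1) ⊆ S n ∧ P (S n) (S (n + 1)) := by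
  choose T hTS hT hP using step
  let S : ℕ → {S : Set α // S.Infinite} :=
    fun n => Nat.rec ⟨M, hM⟩ (fun _ S => ⟨T S.1 S.2, hT S.1 S.2⟩) n
  exact ⟨fun n => (S n).1, rfl, fun n => ⟨(S n).2, hTS _ _, hP _ _⟩⟩

/-- The witness is the set of minima `sInf (S n)` over those `n` for which the colour `B n` takes
a value that it takes infinitely often. -/
theorem exists_monochromaticOn_succ_of_antitone [Finite C] {c : Finset ℕ → C} {k : ℕ}
    {S : ℕ → Set ℕ} (hS : ∀ n, (S n).Infinite) (hanti : Antitone S)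
    (hgt : ∀ n, ∀ x ∈ S (n + 1), sInf (S n) < x) (B : ℕ → C)
    (hB : ∀ n, MonochromaticOn (fun s => c (insert (sInf (S n)) s)) k (S (n + 1)) (B n)) :
    ∃ L ⊆ S 0, L.Infinite ∧ ∃ v, MonochromaticOn c (k + 1) L v := by
  set a : ℕ → ℕ := fun n => sInf (S n)
  have ha_mem (n : ℕ) : a n ∈ S n := Nat.sInf_mem (hS n).nonempty
  have ha : StrictMono a := strictMono_nat_of_lt_succ fun n => hgt n _ (ha_mem (n + 1))
  obtain ⟨w, hw⟩ := Finite.exists_infinite_fiber B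
  rw [Set.infinite_coe_iff] at hw
  refine ⟨a '' (B ⁻¹' {w}), ?_, hw.image ha.injective.injOn, w, ?_⟩
  · rintro _ ⟨n, -, rfl⟩
    exact hanti n.zero_le (ha_mem n)
  intro s hsL hsk
  have hne : s.Nonempty := Finset.card_pos.mp (by omega)
  have hmin := s.min'_mem hne
  obtain ⟨n, hBn, han⟩ := hsL hmin
  have herase : ↑(s.erase (a n)) ⊆ S (n + 1) := by
    intro x hx
    obtain ⟨hxn, hxs⟩ := Finset.mem_erase.mp hx
    obtain ⟨j, -, rfl⟩ := hsL hxs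
    have hnj : n < j := ha.lt_iff_lt.mp <| lt_of_le_of_ne (han ▸ s.min'_le _ hxs) (Ne.symm hxn)
    exact hanti hnj (ha_mem j)
  have hcard : (s.erase (a n)).card = k := by
    rw [Finset.card_erase_of_mem (han ▸ hmin)]; omega
  have hcolour : c (insert (a n) (s.erase (a n))) = B n := hB n _ herase hcard
  rw [Finset.insert_erase (han ▸ hmin)] at hcolour
  exact hcolour.trans hBn

theorem exists_infinite_monochromaticOn [Finite C] (c : Finset ℕ → C) (k : ℕ) {M : Set ℕ}
    (hM : M.Infinite) : ∃ L ⊆ M, L.Infinite ∧ ∃ v, MonochromaticOn c k L v := by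
  induction k generalizing c M with
  | zero => exact ⟨M, subset_rfl, hM, c ∅, fun s _ hs => by rw [Finset.card_eq_zero.mp hs]⟩
  | succ k ih =>
    have step (S : Set ℕ) (hS : S.Infinite) : ∃ T ⊆ S, T.Infinite ∧ (∀ x ∈ T, sInf S < x) ∧
        ∃ v, MonochromaticOn (fun s => c (insert (sInf S) s)) k T v := by
      obtain ⟨T, hT, hTinf, hmono⟩ :=
        ih (fun s => c (insert (sInf S) s)) (hS.sdiff (Set.finite_Iic (sInf S)))
      exact ⟨T, fun x hx => (hT hx).1, hTinf, fun x hx => not_le.mp (hT hx).2, hmono⟩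
    obtain ⟨S, rfl, hS⟩ := exists_nested_seq _ step hM
    choose hSinf hSsucc hgt B hB using hS
    exact exists_monochromaticOn_succ_of_antitone hSinf (antitone_nat_of_succ_le hSsucc) hgt B hB

end Ramsey

theorem initSeg_insert_of_forall_lt {s : Finset ℕ} {a : ℕ} (h : ∀ x ∈ s, x < a) :
    InitSeg s (insert a s) := by
  refine ⟨Finset.subset_insert a s, fun x hx b hb hbs => ?_⟩
  rcases Finset.mem_insert.mp hb with rfl | hb
  · exact h x hx
  · exact absurd hb hbs

theorem IsTree.exists_subset_mem_card_eq {F : Set (Finset ℕ)} (hF : IsTree F) {s : Finset ℕ}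
    (hs : s ∈ F) {k : ℕ} (hk : k ≤ s.card) : ∃ t ⊆ s, t ∈ F ∧ t.card = k := by
  induction s using Finset.induction_on_max with
  | empty => exact ⟨∅, subset_rfl, hs, (Nat.le_zero.mp hk).symm⟩
  | insert a s hlt ih =>
    rcases hk.eq_or_lt with hk | hk
    · exact ⟨_, subset_rfl, hs, hk.symm⟩
    rw [Finset.card_insert_of_notMem fun ha => (hlt a ha).false] at hk
    obtain ⟨t, hts, htF, htk⟩ := ih (hF.2 _ hs _ (initSeg_insert_of_forall_lt hlt)) (by omega)
    exact ⟨t, hts.trans (Finset.subset_insert a s), htF, htk⟩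

/-- Proposition 3.1 for `ξ = k`: for a tree `F` there is an infinite `L ⊆ M` such that either
every `k`-element subset of `L` is in `F`, or every element of `F` contained in `L` has fewer
than `k` elements. -/
theorem tree_dichotomy_finite (F : Set (Finset ℕ)) (hF : IsTree F)
    (M : Set ℕ) (hM : M.Infinite) (k : ℕ) :
    ∃ L ⊆ M, L.Infinite ∧
      ((∀ s : Finset ℕ, ↑s ⊆ L → s.card = k → s ∈ F) ∨
       (∀ s ∈ F, ↑s ⊆ L → s.card < k)) := by
  classical
  obtain ⟨L, hLM, hL, v, hv⟩ := exists_infinite_monochromaticOn (fun s => decide (s ∈ F)) k hM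
  refine ⟨L, hLM, hL, ?_⟩
  cases v
  · right
    intro s hs hsL
    by_contra! hks
    obtain ⟨t, hts, htF, htk⟩ := hF.exists_subset_mem_card_eq hs hks
    simpa [htF] using hv t ((Finset.coe_subset.mpr hts).trans hsL) htk
  · left
    intro s hsL hsk
    simpa using hv s hsL hsk
end

section
/- Let M be an infinite subset of ℕ, and let [M]^{<ω} be partitioned into finitely many pieces P₁, ..., P_n. Then there exist an infinite subset L of M and an index i such that A_ω ∩ [L]^{<ω} ⊆ P_i. -/
/-!
Colour every finite subset of `M` by the piece containing it. A set `s ∈ A_ω` with minimum `a`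
is `a` together with `a - 1` larger elements. A diagonal argument picks `a₀ < a₁ < ⋯` and nested
infinite sets `L₀ ⊇ L₁ ⊇ ⋯` such that adding `aⱼ` to any `(aⱼ - 1)`-subset of `Lⱼ` gives the
same colour `cⱼ`, each `Lⱼ` coming from the infinite Ramsey theorem; by pigeonhole infinitely
many `cⱼ` coincide, and the corresponding `aⱼ` form `L`. With a fixed size in place of `aⱼ - 1`,
the same diagonal argument proves the infinite Ramsey theorem itself, by induction on the size.
-/

open Set Finset

variable {C : Type*}

theorem exists_strictMono_diagonal (Q : ℕ → Set ℕ → C → Prop) {M : Set ℕ} (hM : M.Infinite)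
    (H : ∀ N : Set ℕ, N.Infinite → ∀ a, ∃ L ⊆ N, L.Infinite ∧ ∃ i, Q a L i) :
    ∃ (a : ℕ → ℕ) (col : ℕ → C), StrictMono a ∧ (∀ j, a j ∈ M) ∧
      ∀ j, ∃ L, Q (a j) L (col j) ∧ ∀ j' > j, a j' ∈ L := by
  have step : ∀ N : {N : Set ℕ // N.Infinite}, ∃ L : {L : Set ℕ // L.Infinite}, ∃ i,
      L.1 ⊆ N.1 \ Set.Iic (sInf N.1) ∧ Q (sInf N.1) L.1 i := by
    rintro ⟨N, hN⟩
    obtain ⟨L, hLN, hL, i, hi⟩ := H _ (hN.sdiff (finite_Iic (sInf N))) (sInf N)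
    exact ⟨⟨L, hL⟩, i, hLN, hi⟩
  choose next col hsub hQ using step
  let seq : ℕ → {N : Set ℕ // N.Infinite} := fun j => next^[j] ⟨M, hM⟩
  have hseq_succ (j : ℕ) : seq (j + 1) = next (seq j) := Function.iterate_succ_apply' ..
  have hmem (j : ℕ) : sInf (seq j).1 ∈ (seq j).1 := Nat.sInf_mem (seq j).2.nonempty
  have hanti : Antitone fun j => (seq j).1 := antitone_nat_of_succ_le fun j => by
    rw [hseq_succ]
    exact (hsub _).trans sdiff_subset
  refine ⟨fun j => sInf (seq j).1, fun j => col (seq j), strictMono_nat_of_lt_succ fun j => ?_,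
    fun j => hanti (Nat.zero_le j) (hmem j), fun j => ⟨(next (seq j)).1, hQ _, fun j' hj' => ?_⟩⟩
  · simpa using (hsub (seq j) (hseq_succ j ▸ hmem (j + 1))).2
  · rw [← hseq_succ]
    exact hanti hj' (hmem j')

theorem exists_infinite_homogeneous_of_min [Finite C] (c : Finset ℕ → C) (k : ℕ → ℕ)
    {M : Set ℕ} (hM : M.Infinite)
    (H : ∀ N : Set ℕ, N.Infinite → ∀ a, ∃ L ⊆ N, L.Infinite ∧ ∃ i,
      ∀ s : Finset ℕ, ↑s ⊆ L → s.card = k a → c (insert a s) = i) :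
    ∃ L ⊆ M, L.Infinite ∧ ∃ i, ∀ s : Finset ℕ, ∀ hs : s.Nonempty, ↑s ⊆ L →
      s.card = k (s.min' hs) + 1 → c s = i := by
  obtain ⟨a, col, ha, haM, hdiag⟩ := exists_strictMono_diagonal _ hM H
  obtain ⟨i, hi⟩ := Finite.exists_infinite_fiber col
  refine ⟨a '' (col ⁻¹' {i}), image_subset_iff.2 fun j _ => haM j,
    (Set.infinite_coe_iff.1 hi).image ha.injective.injOn, i, ?_⟩
  rintro s hs hsL hcard
  obtain ⟨j, rfl, hjmin⟩ := hsL (s.min'_mem hs)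
  obtain ⟨L, hL, haL⟩ := hdiag j
  have hcard' : (s.erase (a j)).card = k (a j) := by
    rw [card_erase_of_mem (hjmin ▸ s.min'_mem hs), hcard, hjmin]
    rfl
  have hsub : ↑(s.erase (a j)) ⊆ L := by
    intro y hy
    obtain ⟨j', -, rfl⟩ := hsL (mem_of_mem_erase hy)
    refine haL j' (ha.lt_iff_lt.1 ?_)
    rw [hjmin]
    exact s.min'_lt_of_mem_erase_min' hs (hjmin ▸ hy)
  rw [← insert_erase (hjmin ▸ s.min'_mem hs : a j ∈ s)]
  exact hL _ hsub hcard'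

theorem exists_infinite_homogeneous [Finite C] (k : ℕ) (c : Finset ℕ → C) {M : Set ℕ}
    (hM : M.Infinite) :
    ∃ L ⊆ M, L.Infinite ∧ ∃ i, ∀ s : Finset ℕ, ↑s ⊆ L → s.card = k → c s = i := by
  induction k generalizing c M with
  | zero => exact ⟨M, subset_rfl, hM, c ∅, fun s _ hs => by rw [card_eq_zero.1 hs]⟩
  | succ k ih =>
    obtain ⟨L, hLM, hL, i, hi⟩ := exists_infinite_homogeneous_of_min c (fun _ => k) hM
      fun N hN a => ih (fun t => c (insert a t)) hN
    exact ⟨L, hLM, hL, i, fun s hsL hs => hi s (card_pos.1 (by omega)) hsL hs⟩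

theorem partition_omega_general (M : Set ℕ) (hM : M.Infinite) (n : ℕ) (P : Fin n → Set (Finset ℕ))
    (hcover : ∀ s : Finset ℕ, ↑s ⊆ M → ∃ i, s ∈ P i) :
    ∃ L ⊆ M, L.Infinite ∧ ∃ i, ∀ s ∈ Aomega, ↑s ⊆ L → s ∈ P i := by
  have : Nonempty (Fin n) := ⟨(hcover ∅ (by simp)).choose⟩
  classical
  choose piece hpiece using hcover
  let c : Finset ℕ → Fin n := fun s => if h : ↑s ⊆ M then piece s h else Classical.arbitrary _
  obtain ⟨L, hLM, hL, i, hi⟩ := exists_infinite_homogeneous_of_min c (· - 1) hM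
    fun N hN a => exists_infinite_homogeneous (a - 1) (fun t => c (insert a t)) hN
  refine ⟨L, hLM, hL, i, ?_⟩
  rintro s ⟨hs, hmin⟩ hsL
  have hsM : ↑s ⊆ M := hsL.trans hLM
  have hcs : c s = i := hi s hs hsL (by have := hs.card_pos; omega)
  have hpiece_eq : piece s hsM = i := by simpa only [c, dif_pos hsM] using hcs
  exact hpiece_eq ▸ hpiece s hsM

/-- Corollary 1.8 for `ξ = ω`: for every finite partition of `[M]^{<ω}` there are an infinite
`L ⊆ M` and a piece containing `A_ω ∩ [L]^{<ω}`. -/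
theorem partition_omega (M : Set ℕ) (hM : M.Infinite) (n : ℕ) (P : Fin n → Set (Finset ℕ))
    (hcover : ∀ s : Finset ℕ, ↑s ⊆ M → ∃ i, s ∈ P i)
    (hdisj : ∀ i j, i ≠ j → ∀ s : Finset ℕ, s ∈ P i → s ∉ P j) :
    ∃ L ⊆ M, L.Infinite ∧ ∃ i, ∀ s ∈ Aomega, ↑s ⊆ L → s ∈ P i :=
  partition_omega_general M hM n P hcover
end

section
/- For every family F of finite subsets of ℕ and every infinite subset M of ℕ, if A_ω ∩ F ∩ [I]^{<ω} ≠ ∅ for every infinite subset I of M, then there exists an infinite subset L of M with A_ω ∩ [L]^{<ω} ⊆ F. -/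
/-- Generic diagonalization: iterate a shrinking step on infinite subsets of `ℕ`. -/
lemma seq_build (M : Set ℕ) (hM : M.Infinite)
    (D : Set ℕ → ℕ → Bool → Set ℕ → Prop)
    (key : ∀ H : Set ℕ, H.Infinite →
      ∃ a b H', a ∈ H ∧ H' ⊆ H ∧ H'.Infinite ∧ (∀ x ∈ H', a < x) ∧ D H a b H') :
    ∃ (a : ℕ → ℕ) (b : ℕ → Bool) (S : ℕ → Set ℕ),
      S 0 = M ∧ (∀ i, (S i).Infinite) ∧ (∀ i, a i ∈ S i) ∧ (∀ i, S (i+1) ⊆ S i) ∧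
      (∀ i x, x ∈ S (i+1) → a i < x) ∧ (∀ i, D (S i) (a i) (b i) (S (i+1))) := by
  choose fa fb fH hmem hsub hinf hgt hD using key
  let T : ℕ → {H : Set ℕ // H.Infinite} := fun i =>
    Nat.rec ⟨M, hM⟩ (fun _ p => ⟨fH p.1 p.2, hinf p.1 p.2⟩) i
  exact ⟨fun i => fa (T i).1 (T i).2, fun i => fb (T i).1 (T i).2, fun i => (T i).1,
    rfl, fun i => (T i).2, fun i => hmem _ _, fun i => hsub _ _,
    fun i x hx => hgt _ _ x hx, fun i => hD _ _⟩

/-- chain monotonicity -/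
lemma chain_subset (S : ℕ → Set ℕ) (hS : ∀ i, S (i+1) ⊆ S i) :
    ∀ i j, i ≤ j → S j ⊆ S i := by
  intro i j hij
  induction j, hij using Nat.le_induction with
  | base => exact subset_rfl
  | succ n hn ih => exact (hS n).trans ih

/-- Infinite Ramsey theorem for `n`-element subsets of `ℕ`, two colors. -/
theorem ramsey : ∀ (n : ℕ) (c : Finset ℕ → Bool) (M : Set ℕ), M.Infinite →
    ∃ H ⊆ M, H.Infinite ∧ ∃ b, ∀ s : Finset ℕ, ↑s ⊆ H → s.card = n → c s = b := by
  intro n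
  induction n with
  | zero =>
    intro c M hM
    refine ⟨M, subset_rfl, hM, c ∅, fun s _ hs => ?_⟩
    rw [Finset.card_eq_zero.mp hs]
  | succ n IH =>
    intro c M hM
    have key : ∀ H : Set ℕ, H.Infinite →
        ∃ a b H', a ∈ H ∧ H' ⊆ H ∧ H'.Infinite ∧ (∀ x ∈ H', a < x) ∧
          (∀ t : Finset ℕ, ↑t ⊆ H' → t.card = n → c (insert a t) = b) := by
      intro H hH
      set a := sInf H with ha
      have haH : a ∈ H := Nat.sInf_mem hH.nonempty
      have h0 : ({x ∈ H | a < x} : Set ℕ).Infinite :=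
      (hH.diff (Set.finite_Iic a)).mono (fun x hx => ⟨hx.1, lt_of_not_ge hx.2⟩)
      obtain ⟨H', hH'sub, hH'inf, b, hb⟩ := IH (fun t => c (insert a t)) _ h0
      exact ⟨a, b, H', haH, hH'sub.trans (Set.sep_subset _ _), hH'inf,
        fun x hx => (hH'sub hx).2, hb⟩
    obtain ⟨a, b, S, hS0, hSinf, haS, hSsub, hgt, hD⟩ := seq_build M hM
      (fun H a bb H' => ∀ t : Finset ℕ, ↑t ⊆ H' → t.card = n → c (insert a t) = bb) key
    have hchain := chain_subset S hSsub
    have hmono : StrictMono a := strictMono_nat_of_lt_succ fun i => hgt i _ (haS (i+1))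
    -- pigeonhole on colors
    have hpig : ∃ v, {i | b i = v}.Infinite := by
      by_contra hcon
      push_neg at hcon
      have h1 := hcon true
      have h2 := hcon false
      have : (Set.univ : Set ℕ).Finite := by
        have : (Set.univ : Set ℕ) = {i | b i = true} ∪ {i | b i = false} := by
          ext i; simp [Bool.eq_false_or_eq_true (b i)]
        rw [this]; exact h1.union h2
      exact Set.infinite_univ this
    obtain ⟨v, hv⟩ := hpig
    refine ⟨a '' {i | b i = v}, ?_, hv.image (hmono.injective.injOn), v, ?_⟩
    · rintro x ⟨i, _, rfl⟩
      exact hS0 ▸ hchain 0 i (Nat.zero_le i) (haS i)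
    · intro s hsub hcard
      have hne : s.Nonempty := Finset.card_pos.mp (by omega)
      obtain ⟨i, hiv, hia⟩ := hsub (Finset.mem_coe.mpr (s.min'_mem hne))
      have ht : (↑(s.erase (a i)) : Set ℕ) ⊆ S (i+1) := by
        intro x hx
        have hxs : x ∈ s := Finset.mem_of_mem_erase (by exact_mod_cast hx)
        have hxne : x ≠ a i := Finset.ne_of_mem_erase (by exact_mod_cast hx)
        obtain ⟨j, _, hja⟩ := hsub (Finset.mem_coe.mpr hxs)
        have : a i < a j := lt_of_le_of_ne (hja ▸ hia ▸ s.min'_le x hxs) (fun e => hxne (hja ▸ e.symm ▸ rfl))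
        have hij : i < j := hmono.lt_iff_lt.mp this
        exact hja ▸ hchain (i+1) j hij (haS j)
      have hcard' : (s.erase (a i)).card = n := by
        rw [Finset.card_erase_of_mem (hia ▸ s.min'_mem hne)]; omega
      have := hD i (s.erase (a i)) ht hcard'
      rwa [Finset.insert_erase (hia ▸ s.min'_mem hne), hiv] at this

/-- Corollary 1.9 for `ξ = ω`: if every infinite `I ⊆ M` contains an element of `A_ω ∩ F`,
then some infinite `L ⊆ M` satisfies `A_ω ∩ [L]^{<ω} ⊆ F`. -/
theorem galvin_omega (F : Set (Finset ℕ)) (M : Set ℕ) (hM : M.Infinite)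
    (h : ∀ I ⊆ M, I.Infinite → ∃ s ∈ Aomega, s ∈ F ∧ ↑s ⊆ I) :
    ∃ L ⊆ M, L.Infinite ∧ ∀ s ∈ Aomega, ↑s ⊆ L → s ∈ F := by
  classical
  -- diagonalization with colorings depending on the chosen point
  have key : ∀ H : Set ℕ, H.Infinite →
      ∃ a b H', a ∈ H ∧ H' ⊆ H ∧ H'.Infinite ∧ (∀ x ∈ H', a < x) ∧
        (∀ t : Finset ℕ, ↑t ⊆ H' → t.card = a - 1 → (insert a t ∈ F ↔ b = true)) := by
    intro H hH
    set a := sInf H with ha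
    have haH : a ∈ H := Nat.sInf_mem hH.nonempty
    have h0 : ({x ∈ H | a < x} : Set ℕ).Infinite :=
      (hH.diff (Set.finite_Iic a)).mono (fun x hx => ⟨hx.1, lt_of_not_ge hx.2⟩)
    obtain ⟨H', hH'sub, hH'inf, b, hb⟩ :=
      ramsey (a - 1) (fun t => decide (insert a t ∈ F)) _ h0
    refine ⟨a, b, H', haH, hH'sub.trans (Set.sep_subset _ _), hH'inf,
      fun x hx => (hH'sub hx).2, fun t ht hc => ?_⟩
    have := hb t ht hc
    constructor
    · intro hF; rw [← this]; simp [hF]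
    · intro hb'; rw [hb'] at this; exact of_decide_eq_true this
  obtain ⟨a, b, S, hS0, hSinf, haS, hSsub, hgt, hD⟩ := seq_build M hM
    (fun H a bb H' => ∀ t : Finset ℕ, ↑t ⊆ H' → t.card = a - 1 → (insert a t ∈ F ↔ bb = true)) key
  have hchain := chain_subset S hSsub
  have hmono : StrictMono a := strictMono_nat_of_lt_succ fun i => hgt i _ (haS (i+1))
  have haM : ∀ i, a i ∈ M := fun i => hS0 ▸ hchain 0 i (Nat.zero_le i) (haS i)
  -- parsing a member of Aomega inside an image set
  have parse : ∀ (T : Set ℕ) (s : Finset ℕ), s ∈ Aomega → (↑s : Set ℕ) ⊆ a '' T →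
      ∃ i ∈ T, s = insert (a i) (s.erase (a i)) ∧ (↑(s.erase (a i)) : Set ℕ) ⊆ S (i+1) ∧
        (s.erase (a i)).card = a i - 1 := by
    rintro T s ⟨hne, hmin⟩ hsub
    obtain ⟨i, hiT, hia⟩ := hsub (Finset.mem_coe.mpr (s.min'_mem hne))
    have hmem : a i ∈ s := hia ▸ s.min'_mem hne
    have hcard : s.card = a i := by rw [← hmin, ← hia]
    refine ⟨i, hiT, (Finset.insert_erase hmem).symm, ?_, ?_⟩
    · intro x hx
      have hxs : x ∈ s := Finset.mem_of_mem_erase (by exact_mod_cast hx)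
      have hxne : x ≠ a i := Finset.ne_of_mem_erase (by exact_mod_cast hx)
      obtain ⟨j, _, hja⟩ := hsub (Finset.mem_coe.mpr hxs)
      have : a i < a j := lt_of_le_of_ne (hja ▸ hia ▸ s.min'_le x hxs) (fun e => hxne (hja ▸ e.symm ▸ rfl))
      exact hja ▸ hchain (i+1) j (hmono.lt_iff_lt.mp this) (haS j)
    · rw [Finset.card_erase_of_mem hmem, hcard]
  -- the set of bad indices is finite
  have hbadfin : {i | b i = false}.Finite := by
    by_contra hbad
    have hbadinf : {i | b i = false}.Infinite := hbad
    have hIsub : a '' {i | b i = false} ⊆ M := by rintro x ⟨i, _, rfl⟩; exact haM i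
    obtain ⟨s, hsA, hsF, hsI⟩ := h _ hIsub (hbadinf.image (hmono.injective.injOn))
    obtain ⟨i, hib, heq, htS, htc⟩ := parse _ s hsA hsI
    have := (hD i _ htS htc).mp (heq ▸ hsF)
    rw [hib] at this; exact Bool.false_ne_true this
  have hgood : {i | b i = true}.Infinite := by
    by_contra hg
    have := Set.not_infinite.mp hg
    have huniv : (Set.univ : Set ℕ).Finite := by
      have he : (Set.univ : Set ℕ) = {i | b i = true} ∪ {i | b i = false} := by
        ext i; simp [Bool.eq_false_or_eq_true (b i)]
      rw [he]; exact this.union hbadfin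
    exact Set.infinite_univ huniv
  refine ⟨a '' {i | b i = true}, ?_, hgood.image (hmono.injective.injOn), ?_⟩
  · rintro x ⟨i, _, rfl⟩; exact haM i
  · intro s hsA hsL
    obtain ⟨i, hig, heq, htS, htc⟩ := parse _ s hsA hsL
    have := (hD i _ htS htc).mpr hig
    rwa [← heq] at this
end

section
/- Let U be a family of infinite subsets of ℕ that is closed in the topology of pointwise convergence, let M be an infinite subset of ℕ, and let L ⊆ M be infinite such that for every finite subset s of L there exists an infinite N ∈ U with N ⊇ s and min(N\s) > max s (i.e. [s,ℕ] ∩ U ≠ ∅, so [L]^{<ω} ⊆ F = {s : [s,ℕ] ∩ U ≠ ∅}). Then [L] ⊆ U, that is, every infinite subset of L belongs to U. -/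
/-- The characteristic function of a set of naturals, as an element of `{0,1}^ℕ`. -/
noncomputable def charSet (A : Set ℕ) : ℕ → Bool :=
  fun n => @decide (n ∈ A) (Classical.propDecidable _)

/-- Key step of Theorem 3.15, Case 1: if `U` is a pointwise closed family of infinite subsets
of `ℕ` and `L` is infinite such that every finite subset `s` of `L` extends to a member of `U`
lying in `[s, ℕ]`, then every infinite subset of `L` belongs to `U`. -/
theorem closed_family_all_subsets (U : Set (Set ℕ)) (hInf : ∀ A ∈ U, A.Infinite)
    (hclosed : ∀ A : Set ℕ, A.Infinite → charSet A ∈ closure (charSet '' U) → A ∈ U)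
    (L : Set ℕ) (hL : L.Infinite)
    (h : ∀ s : Finset ℕ, ↑s ⊆ L →
      ∃ N ∈ U, ↑s ⊆ N ∧ ∀ a ∈ s, ∀ b ∈ N, b ∉ s → a < b) :
    ∀ I ⊆ L, I.Infinite → I ∈ U := by
  intro I hIL hI
  have hm : ∀ n : ℕ, ∃ m ∈ I, n ≤ m := by
    intro n
    obtain ⟨m, hmI, hmn⟩ := hI.exists_gt n
    exact ⟨m, hmI, hmn.le⟩
  choose m hmI hmn using hm
  have hsfin : ∀ n, (I ∩ Set.Iic (m n)).Finite :=
    fun n => (Set.finite_Iic (m n)).inter_of_right _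
  have hN : ∀ n, ∃ N ∈ U, ↑(hsfin n).toFinset ⊆ N ∧
      ∀ a ∈ (hsfin n).toFinset, ∀ b ∈ N, b ∉ (hsfin n).toFinset → a < b := by
    intro n
    apply h
    intro x hx
    rw [Set.Finite.coe_toFinset] at hx
    exact hIL hx.1
  choose N hNU hsN hNgt using hN
  apply hclosed I hI
  apply mem_closure_of_tendsto (f := fun n => charSet (N n)) (b := Filter.atTop)
  · rw [tendsto_pi_nhds]
    intro x
    apply tendsto_nhds_of_eventually_eq
    filter_upwards [Filter.eventually_ge_atTop x] with n hn
    have hxm : x ≤ m n := hn.trans (hmn n)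
    have hmem : m n ∈ (hsfin n).toFinset := by
      rw [Set.Finite.mem_toFinset]
      exact ⟨hmI n, Set.mem_Iic.mpr le_rfl⟩
    have hiff : (x ∈ N n) ↔ (x ∈ I) := by
      constructor
      · intro hx
        by_cases hxs : x ∈ (hsfin n).toFinset
        · rw [Set.Finite.mem_toFinset] at hxs
          exact hxs.1
        · exact absurd (hNgt n (m n) hmem x hx hxs) (not_lt.mpr hxm)
      · intro hx
        apply hsN n
        rw [Finset.mem_coe, Set.Finite.mem_toFinset]
        exact ⟨hx, hxm⟩
    simp only [charSet]
    exact decide_eq_decide.mpr hiff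
  · exact Filter.Eventually.of_forall fun n => Set.mem_image_of_mem _ (hNU n)
end

section
/- Let U be a family of infinite subsets of ℕ, M an infinite subset of ℕ, and α a finite subset of ℕ. Then there exists an infinite subset L of M such that either [α, L] is contained in the closure of U in the Ellentuck topology, or [α, L] ⊆ [ℕ] \ U. -/
/-!
Galvin–Prikry combinatorial forcing. Say `N` accepts `s` if `[s, N']` meets `U` for every
infinite `N' ⊆ N`, and rejects `s` if `[s, N]` misses `U`; every infinite set has an infinite
subset that accepts or rejects `s`. If no infinite subset of `M` rejects `α`, then `M` accepts
`α`. A fusion argument gives an infinite `D ⊆ M` whose tail above each `m ∈ D` decides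
`α ∪ F` for every `F ⊆ [0, m]`. If `D` above `F` accepts `α ∪ F`, then `D` above `m` rejects
`α ∪ F ∪ {m}` for only finitely many `m`, so `D` thins out to an `L` whose tail above each
finite `F ⊆ L` accepts `α ∪ F`. Every Ellentuck neighbourhood of `X ∈ [α, L]` contains some
`[β, X]` with `β` an initial segment of `X`, and `[β, X]` contains `[α ∪ β, X ∖ (α ∪ β)]`,
which meets `U`.
-/

/-- The space `[ℕ]` of infinite subsets of `ℕ`. -/
abbrev InfNat := {A : Set ℕ // A.Infinite}

/-- The Ellentuck basic set `[α, M] = {α ∪ N : N ∈ [M], max α < min N}`. -/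
def EllSet (α : Finset ℕ) (M : Set ℕ) : Set InfNat :=
  {X | ↑α ⊆ X.1 ∧ X.1 \ ↑α ⊆ M ∧ ∀ a ∈ α, ∀ b ∈ X.1, b ∉ α → a < b}

/-- The Ellentuck topology on `[ℕ]`, generated by the sets `[α, M]`. -/
def EllentuckTop : TopologicalSpace InfNat :=
  TopologicalSpace.generateFrom
    {S | ∃ (α : Finset ℕ) (M : Set ℕ), M.Infinite ∧ S = EllSet α M}

open Set Filter

def IsInitialSeg (β : Finset ℕ) (X : Set ℕ) : Prop :=
  ↑β ⊆ X ∧ ∀ a ∈ β, ∀ b ∈ X, b ∉ β → a < b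

lemma IsInitialSeg.union {β γ : Finset ℕ} {X : Set ℕ} (hβ : IsInitialSeg β X)
    (hγ : IsInitialSeg γ X) : IsInitialSeg (β ∪ γ) X := by
  refine ⟨by simpa using And.intro hβ.1 hγ.1, fun a ha b hb hbn => ?_⟩
  rw [Finset.mem_union, not_or] at hbn
  rcases Finset.mem_union.1 ha with ha | ha
  exacts [hβ.2 a ha b hb hbn.1, hγ.2 a ha b hb hbn.2]

section ellSet

variable {β γ : Finset ℕ} {N N' : Set ℕ}

lemma isInitialSeg_of_mem_ellSet {X : InfNat} (hX : X ∈ EllSet β N) : IsInitialSeg β X.1 :=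
  ⟨hX.1, hX.2.2⟩

lemma ellSet_mono (h : N' ⊆ N) : EllSet β N' ⊆ EllSet β N :=
  fun _ hX => ⟨hX.1, hX.2.1.trans h, hX.2.2⟩

lemma ellSet_subset_of_mem {X : InfNat} (hX : X ∈ EllSet β N) : EllSet β X.1 ⊆ EllSet β N :=
  fun _ hY => ⟨hY.1, fun _ hy => hX.2.1 ⟨hY.2.1 hy, hy.2⟩, hY.2.2⟩

lemma ellSet_subset_ellSet {X : Set ℕ} (hβ : IsInitialSeg β X) (hγ : ↑γ ⊆ X) (hβγ : β ⊆ γ) :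
    EllSet γ X ⊆ EllSet β X := by
  rintro Y ⟨hγY, hYX, hγlt⟩
  refine ⟨(Finset.coe_subset.2 hβγ).trans hγY, fun y hy => ?_, fun a ha b hb hbβ => ?_⟩
  · by_cases hyγ : y ∈ γ
    exacts [hγ hyγ, hYX ⟨hy.1, hyγ⟩]
  · by_cases hbγ : b ∈ γ
    exacts [hβ.2 a ha b (hγ hbγ) hbβ, hγlt a (hβγ ha) b hb hbγ]

end ellSet

open Topology in
lemma exists_isInitialSeg_ellSet_subset {O : Set InfNat} (hO : IsOpen[EllentuckTop] O)
    {X : InfNat} (hX : X ∈ O) : ∃ β, IsInitialSeg β X.1 ∧ EllSet β X.1 ⊆ O := by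
  induction hO with
  | basic S hS =>
    obtain ⟨β, N, -, rfl⟩ := hS
    exact ⟨β, isInitialSeg_of_mem_ellSet hX, ellSet_subset_of_mem hX⟩
  | univ => exact ⟨∅, by simp [IsInitialSeg], subset_univ _⟩
  | inter S T _ _ ihS ihT =>
    obtain ⟨β, hβ, hβS⟩ := ihS hX.1
    obtain ⟨γ, hγ, hγT⟩ := ihT hX.2
    have hβγ := hβ.union hγ
    exact ⟨β ∪ γ, hβγ, subset_inter
      ((ellSet_subset_ellSet hβ hβγ.1 Finset.subset_union_left).trans hβS)
      ((ellSet_subset_ellSet hγ hβγ.1 Finset.subset_union_right).trans hγT)⟩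
  | sUnion S _ ih =>
    obtain ⟨T, hTS, hXT⟩ := hX
    obtain ⟨β, hβ, hβT⟩ := ih T hTS hXT
    exact ⟨β, hβ, hβT.trans (subset_sUnion_of_mem hTS)⟩

lemma mem_closure_of_forall_isInitialSeg {U : Set InfNat} {X : InfNat}
    (h : ∀ β, IsInitialSeg β X.1 → (EllSet β X.1 ∩ U).Nonempty) :
    X ∈ @closure InfNat EllentuckTop U := by
  refine (@mem_closure_iff _ EllentuckTop _ _).2 fun O hO hXO => ?_
  obtain ⟨β, hβ, hβO⟩ := exists_isInitialSeg_ellSet_subset hO hXO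
  obtain ⟨Y, hY, hYU⟩ := h β hβ
  exact ⟨Y, hβO hY, hYU⟩

lemma exists_infinite_subset_forall_mem {ι E : Type*} {P : ι → Set E → Prop}
    (hmono : ∀ i ⦃N N'⦄, N' ⊆ N → P i N → P i N')
    (hex : ∀ i N, N.Infinite → ∃ N' ⊆ N, N'.Infinite ∧ P i N') (s : Finset ι) {N : Set E}
    (hN : N.Infinite) : ∃ N' ⊆ N, N'.Infinite ∧ ∀ i ∈ s, P i N' := by
  classical
  induction s using Finset.induction_on with
  | empty => exact ⟨N, subset_rfl, hN, by simp⟩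
  | insert i s _ ih =>
    obtain ⟨N₁, hN₁N, hN₁, hs⟩ := ih
    obtain ⟨N₂, hN₂N₁, hN₂, hi⟩ := hex i N₁ hN₁
    refine ⟨N₂, hN₂N₁.trans hN₁N, hN₂, ?_⟩
    simpa [hi] using fun j hj => hmono j hN₂N₁ (hs j hj)

/-- Fusion: `N₀ = M`, `Nₖ₊₁ ⊆ Nₖ` lies above `nₖ = min Nₖ` and satisfies `Q nₖ`;
then `L = {nₖ}` works. -/
lemma exists_infinite_subset_forall_tail {Q : ℕ → Set ℕ → Prop}
    (hmono : ∀ m ⦃N N'⦄, N' ⊆ N → Q m N → Q m N')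
    (hex : ∀ m N, N.Infinite → ∃ N' ⊆ N, N'.Infinite ∧ Q m N') {M : Set ℕ}
    (hM : M.Infinite) : ∃ L ⊆ M, L.Infinite ∧ ∀ m ∈ L, Q m (L ∩ Ioi m) := by
  have step (N : Set ℕ) (hN : N.Infinite) :
      ∃ N' ⊆ N \ Iic (sInf N), N'.Infinite ∧ Q (sInf N) N' :=
    hex _ _ (hN.sdiff (finite_Iic _))
  choose! next hnext_sub hnext_inf hnext_Q using step
  set N : ℕ → Set ℕ := fun k => next^[k] M
  have hN_succ (k : ℕ) : N (k + 1) = next (N k) := Function.iterate_succ_apply' next k M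
  have hN_inf (k : ℕ) : (N k).Infinite := by
    induction k with
    | zero => exact hM
    | succ k ih => rw [hN_succ]; exact hnext_inf _ ih
  have hN_succ_sub (k : ℕ) : N (k + 1) ⊆ N k \ Iic (sInf (N k)) := by
    rw [hN_succ]; exact hnext_sub _ (hN_inf k)
  have hN_anti : Antitone N :=
    antitone_nat_of_succ_le fun k => (hN_succ_sub k).trans sdiff_subset
  set n : ℕ → ℕ := fun k => sInf (N k)
  have hn_mem (k : ℕ) : n k ∈ N k := Nat.sInf_mem (hN_inf k).nonempty
  have hn : StrictMono n :=
    strictMono_nat_of_lt_succ fun k => not_le.1 (hN_succ_sub k (hn_mem (k + 1))).2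
  refine ⟨range n, range_subset_iff.2 fun k => hN_anti (Nat.zero_le k) (hn_mem k),
    infinite_range_of_injective hn.injective, ?_⟩
  rintro _ ⟨k, rfl⟩
  refine hmono _ ?_ (hN_succ k ▸ hnext_Q _ (hN_inf k))
  rintro _ ⟨⟨j, rfl⟩, hj⟩
  exact hN_anti (hn.lt_iff_lt.1 hj) (hn_mem j)

lemma exists_infinite_subset_forall_finset {D : Set ℕ} (hD : D.Infinite)
    {G : Finset ℕ → Prop} (h0 : G ∅)
    (hstep : ∀ F, G F → ∀ᶠ m in atTop, m ∈ D → G (insert m F)) :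
    ∃ L ⊆ D, L.Infinite ∧ ∀ F : Finset ℕ, ↑F ⊆ L → G F := by
  have step (K : Finset ℕ) (hK : ∀ F ⊆ K, G F) :
      ∃ m ∈ D, (∀ y ∈ K, y < m) ∧ ∀ F ⊆ K, G (insert m F) := by
    have hev : ∀ᶠ m in atTop, (∀ y ∈ K, y < m) ∧ ∀ F ∈ K.powerset, m ∈ D → G (insert m F) :=
      ((K.eventually_all).2 fun y _ => eventually_gt_atTop y).and
        ((K.powerset.eventually_all).2 fun F hF => hstep F (hK F (Finset.mem_powerset.1 hF)))
    obtain ⟨a, ha⟩ := hev.exists_forall_of_atTop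
    obtain ⟨m, hmD, ham⟩ := hD.exists_gt a
    obtain ⟨hmK, hmG⟩ := ha m ham.le
    exact ⟨m, hmD, hmK, fun F hF => hmG F (Finset.mem_powerset.2 hF) hmD⟩
  choose! next hnext_mem hnext_gt hnext_G using step
  set K : ℕ → Finset ℕ := fun r => (fun K => insert (next K) K)^[r] ∅
  have hK_succ (r : ℕ) : K (r + 1) = insert (next (K r)) (K r) :=
    Function.iterate_succ_apply' _ r ∅
  have hK (r : ℕ) : (∀ F ⊆ K r, G F) ∧ ↑(K r) ⊆ D := by
    induction r with
    | zero => simpa [K] using h0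
    | succ r ih =>
      rw [hK_succ, Finset.coe_insert]
      refine ⟨fun F hF => ?_, insert_subset (hnext_mem _ ih.1) ih.2⟩
      by_cases hmF : next (K r) ∈ F
      · rw [← Finset.insert_erase hmF]
        exact hnext_G _ ih.1 _ (Finset.subset_insert_iff.1 hF)
      · exact ih.1 F ((Finset.subset_insert_iff_of_notMem hmF).1 hF)
  have hK_mono : Monotone fun r => (K r : Set ℕ) :=
    monotone_nat_of_le_succ fun r => by simp only [hK_succ, Finset.coe_insert, subset_insert]
  have hnext_strictMono : StrictMono fun r => next (K r) := strictMono_nat_of_lt_succ fun r =>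
    hnext_gt _ (hK (r + 1)).1 _ (by rw [hK_succ]; exact Finset.mem_insert_self _ _)
  refine ⟨⋃ r, ↑(K r), iUnion_subset fun r => (hK r).2,
    infinite_of_injective_forall_mem hnext_strictMono.injective fun r =>
      mem_iUnion.2 ⟨r + 1, by simp [hK_succ]⟩, fun F hF => ?_⟩
  obtain ⟨r, hr⟩ := hK_mono.directed_le.exists_mem_subset_of_finset_subset_biUnion hF
  exact (hK r).1 F (Finset.coe_subset.1 hr)

def Accepts (U : Set InfNat) (s : Finset ℕ) (N : Set ℕ) : Prop :=
  ∀ N' ⊆ N, N'.Infinite → (EllSet s N' ∩ U).Nonempty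

def Rejects (U : Set InfNat) (s : Finset ℕ) (N : Set ℕ) : Prop :=
  EllSet s N ⊆ Uᶜ

section Forcing

variable {U : Set InfNat} {s : Finset ℕ} {N N' : Set ℕ}

lemma Accepts.mono (h : Accepts U s N) (hN : N' ⊆ N) : Accepts U s N' :=
  fun N'' h'' => h N'' (h''.trans hN)

lemma Rejects.mono (h : Rejects U s N) (hN : N' ⊆ N) : Rejects U s N' :=
  (ellSet_mono hN).trans h

lemma exists_rejects_of_not_accepts (h : ¬Accepts U s N) :
    ∃ N' ⊆ N, N'.Infinite ∧ Rejects U s N' := by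
  simp only [Accepts, not_forall, not_nonempty_iff_eq_empty] at h
  obtain ⟨N', hN', hinf, hempty⟩ := h
  exact ⟨N', hN', hinf, fun X hX hXU => hempty.subset ⟨hX, hXU⟩⟩

lemma exists_accepts_or_rejects (hN : N.Infinite) :
    ∃ N' ⊆ N, N'.Infinite ∧ (Accepts U s N' ∨ Rejects U s N') := by
  by_cases h : Accepts U s N
  · exact ⟨N, subset_rfl, hN, Or.inl h⟩
  · obtain ⟨N', hN', hinf, hrej⟩ := exists_rejects_of_not_accepts h
    exact ⟨N', hN', hinf, Or.inr hrej⟩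

/-- Were there infinitely many such `m`, some `X ∈ U` in `[s, {such m}]` would lie in
`[insert m s, N ∩ (m, ∞)]` for the such `m = min (X \ s)`. -/
lemma Accepts.finite_rejects_insert (h : Accepts U s N) :
    {m ∈ N | Rejects U (insert m s) (N ∩ Ioi m)}.Finite := by
  by_contra hinf
  obtain ⟨X, ⟨hsX, hXbad, hslt⟩, hXU⟩ := h _ (sep_subset _ _) hinf
  set m := sInf (X.1 \ ↑s)
  have hm : m ∈ X.1 \ ↑s := Nat.sInf_mem (X.2.sdiff s.finite_toSet).nonempty
  have habove : ∀ x ∈ X.1, x ∉ insert m s → x ∈ N ∧ m < x := by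
    intro x hx hxms
    rw [Finset.mem_insert, not_or] at hxms
    have hxs : x ∈ X.1 \ ↑s := ⟨hx, hxms.2⟩
    exact ⟨(hXbad hxs).1, lt_of_le_of_ne (Nat.sInf_le hxs) (Ne.symm hxms.1)⟩
  refine (hXbad hm).2 ⟨?_, fun x hx => habove x hx.1 hx.2, fun a ha b hb hbn => ?_⟩ hXU
  · simpa using insert_subset hm.1 hsX
  · rcases Finset.mem_insert.1 ha with rfl | ha
    · exact (habove b hb hbn).2
    · exact hslt a ha b hb fun hbs => hbn (Finset.mem_insert_of_mem hbs)

end Forcing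

section Dichotomy

variable {U : Set InfNat} {α : Finset ℕ}

lemma exists_infinite_subset_forall_accepts {M : Set ℕ} (hM : M.Infinite)
    (hacc : Accepts U α M) : ∃ L ⊆ M, L.Infinite ∧
      ∀ F : Finset ℕ, ↑F ⊆ L → Accepts U (α ∪ F) {x ∈ L | ∀ y ∈ F, y < x} := by
  obtain ⟨D, hDM, hD, hdec⟩ := exists_infinite_subset_forall_tail
    (Q := fun m N => ∀ F ∈ (Finset.Iic m).powerset, Accepts U (α ∪ F) N ∨ Rejects U (α ∪ F) N)
    (fun _ _ _ h hQ F hF => (hQ F hF).imp (·.mono h) (·.mono h))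
    (fun _ _ hN => exists_infinite_subset_forall_mem
      (fun _ _ _ h hF => hF.imp (·.mono h) (·.mono h)) (fun _ _ => exists_accepts_or_rejects) _ hN)
    hM
  have hstep (F : Finset ℕ) (hF : Accepts U (α ∪ F) {x ∈ D | ∀ y ∈ F, y < x}) :
      ∀ᶠ m in atTop, m ∈ D → Accepts U (α ∪ insert m F) {x ∈ D | ∀ y ∈ insert m F, y < x} := by
    obtain ⟨b, hb⟩ := hF.finite_rejects_insert.bddAbove
    filter_upwards [eventually_gt_atTop b,
      (F.eventually_all).2 fun y _ => eventually_gt_atTop y] with m hbm hFm hmD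
    have htail : {x ∈ D | ∀ y ∈ insert m F, y < x} = D ∩ Ioi m := by
      ext x
      simp only [Finset.forall_mem_insert, mem_sep_iff, mem_inter_iff, mem_Ioi]
      exact ⟨fun hx => ⟨hx.1, hx.2.1⟩, fun hx => ⟨hx.1, hx.2, fun y hy => (hFm y hy).trans hx.2⟩⟩
    rw [htail]
    refine (hdec m hmD (insert m F) ?_).resolve_right fun hrej => hbm.not_ge (hb ⟨⟨hmD, hFm⟩, ?_⟩)
    · exact Finset.mem_powerset.2 <| Finset.insert_subset (Finset.mem_Iic.2 le_rfl)
        fun y hy => Finset.mem_Iic.2 (hFm y hy).le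
    · exact (Finset.union_insert m α F ▸ hrej).mono fun x hx => ⟨hx.1.1, hx.2⟩
  obtain ⟨L, hLD, hL, hLacc⟩ :=
    exists_infinite_subset_forall_finset hD (by simpa using hacc.mono hDM) hstep
  exact ⟨L, hLD.trans hDM, hL, fun F hF => (hLacc F hF).mono fun x hx => ⟨hLD hx.1, hx.2⟩⟩

lemma ellSet_subset_closure_of_forall_accepts {L : Set ℕ}
    (h : ∀ F : Finset ℕ, ↑F ⊆ L → Accepts U (α ∪ F) {x ∈ L | ∀ y ∈ F, y < x}) :
    EllSet α L ⊆ @closure InfNat EllentuckTop U := by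
  rintro X ⟨hαX, hXL, hαlt⟩
  refine mem_closure_of_forall_isInitialSeg fun β hβ => ?_
  have hαβ : IsInitialSeg (α ∪ β) X.1 := IsInitialSeg.union ⟨hαX, hαlt⟩ hβ
  have hβα : ↑(β \ α) ⊆ L := fun y hy =>
    hXL ⟨hβ.1 (Finset.mem_sdiff.1 hy).1, (Finset.mem_sdiff.1 hy).2⟩
  have htail : X.1 \ ↑(α ∪ β) ⊆ {x ∈ L | ∀ y ∈ β \ α, y < x} := by
    rintro x ⟨hxX, hxαβ⟩
    rw [Finset.coe_union, mem_union, not_or] at hxαβ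
    exact ⟨hXL ⟨hxX, hxαβ.1⟩, fun y hy => hβ.2 y (Finset.mem_sdiff.1 hy).1 x hxX hxαβ.2⟩
  obtain ⟨Y, hY, hYU⟩ := h (β \ α) hβα _ htail (X.2.sdiff (α ∪ β).finite_toSet)
  rw [Finset.union_sdiff_self_eq_union] at hY
  exact ⟨Y, ellSet_subset_ellSet hβ hαβ.1 Finset.subset_union_right
    (ellSet_mono sdiff_subset hY), hYU⟩

end Dichotomy

/-- Theorem 4.6: for any family `U` of infinite subsets of `ℕ`, any infinite `M` and finite
`α`, there is an infinite `L ⊆ M` with `[α, L]` inside the Ellentuck closure of `U`, or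
`[α, L]` disjoint from `U`. -/
theorem ellentuck_dichotomy (U : Set InfNat) (M : Set ℕ) (hM : M.Infinite) (α : Finset ℕ) :
    ∃ L ⊆ M, L.Infinite ∧
      (EllSet α L ⊆ @closure InfNat EllentuckTop U ∨ EllSet α L ⊆ Uᶜ) := by
  by_cases hacc : Accepts U α M
  · obtain ⟨L, hLM, hL, hLacc⟩ := exists_infinite_subset_forall_accepts hM hacc
    exact ⟨L, hLM, hL, Or.inl (ellSet_subset_closure_of_forall_accepts hLacc)⟩
  · obtain ⟨L, hLM, hL, hrej⟩ := exists_rejects_of_not_accepts hacc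
    exact ⟨L, hLM, hL, Or.inr hrej⟩
end

section
/- A family U of infinite subsets of ℕ is completely Ramsey if and only if U has the Baire property in the Ellentuck topology. -/
/-- `U` is completely Ramsey. -/
def CompletelyRamsey (U : Set InfNat) : Prop :=
  ∀ (α : Finset ℕ) (M : Set ℕ), M.Infinite →
    ∃ L ⊆ M, L.Infinite ∧ (EllSet α L ⊆ U ∨ EllSet α L ⊆ Uᶜ)

/- ### basic helper lemmas -/

lemma ellSet_mono_s17 {α : Finset ℕ} {L M : Set ℕ} (h : L ⊆ M) : EllSet α L ⊆ EllSet α M :=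
  fun X hX => ⟨hX.1, hX.2.1.trans h, hX.2.2⟩

lemma inter_Ioi_infinite {L : Set ℕ} (hL : L.Infinite) (n : ℕ) : (L ∩ Set.Ioi n).Infinite := by
  have : L ∩ Set.Ioi n = L \ Set.Iic n := by
    ext x; simp [Set.mem_diff, Set.mem_Ioi, Set.mem_Iic, not_le]
  rw [this]
  exact hL.diff (Set.finite_Iic n)

/-- Key "shrink" lemma : basic sets built from an extension of `α` inside a member `X`
of `EllSet α M` are contained in `EllSet α M`. -/
lemma ell_sub {α γ : Finset ℕ} {M L : Set ℕ} {X : InfNat} (hX : X ∈ EllSet α M)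
    (hαγ : α ⊆ γ) (hγX : ↑γ ⊆ X.1) (hLM : L ⊆ M) : EllSet γ L ⊆ EllSet α M := by
  rintro Y ⟨hγY, hYL, hord⟩
  refine ⟨(Finset.coe_subset.2 hαγ).trans hγY, ?_, ?_⟩
  · intro b hb
    by_cases hbγ : b ∈ (γ : Set ℕ)
    · exact hX.2.1 ⟨hγX hbγ, hb.2⟩
    · exact hLM (hYL ⟨hb.1, hbγ⟩)
  · intro a ha b hb hbα
    by_cases hbγ : b ∈ γ
    · exact hX.2.2 a ha b (hγX hbγ) hbα
    · exact hord a (hαγ ha) b hb hbγ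

/-- Nonemptiness of basic sets, with a canonical witness. -/
lemma ellSet_nonempty {α : Finset ℕ} {L : Set ℕ} (hL : L.Infinite) :
    (EllSet α L).Nonempty := by
  set B := α.sup id with hB
  refine ⟨⟨↑α ∪ (L ∩ Set.Ioi B), ?_⟩, ?_, ?_, ?_⟩
  · exact (inter_Ioi_infinite hL B).mono Set.subset_union_right
  · exact Set.subset_union_left
  · intro x hx
    rcases hx.1 with h | h
    · exact absurd h hx.2
    · exact h.1
  · intro a ha b hb hbα
    rcases hb with h | h
    · exact absurd h hbα
    · exact lt_of_le_of_lt (Finset.le_sup (f := id) ha) h.2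

lemma ellSet_isOpen {α : Finset ℕ} {L : Set ℕ} (hL : L.Infinite) :
    @IsOpen InfNat EllentuckTop (EllSet α L) :=
  TopologicalSpace.GenerateOpen.basic _ ⟨α, L, hL, rfl⟩

/-- The basic sets form a topological basis for the Ellentuck topology. -/
lemma ellBasis : @TopologicalSpace.IsTopologicalBasis InfNat EllentuckTop
    {S | ∃ (α : Finset ℕ) (M : Set ℕ), M.Infinite ∧ S = EllSet α M} := by
  letI := EllentuckTop
  refine ⟨?_, ?_, rfl⟩
  · rintro t₁ ⟨α, M, hM, rfl⟩ t₂ ⟨β, N, hN, rfl⟩ X ⟨hX1, hX2⟩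
    refine ⟨EllSet (α ∪ β) (M ∩ N), ⟨α ∪ β, M ∩ N, ?_, rfl⟩, ?_, ?_⟩
    · -- M ∩ N infinite since X.1 \ (α ∪ β) ⊆ M ∩ N
      have hsub : X.1 \ ↑(α ∪ β) ⊆ M ∩ N := by
        intro x hx
        rw [Finset.coe_union] at hx
        exact ⟨hX1.2.1 ⟨hx.1, fun h => hx.2 (Or.inl h)⟩,
          hX2.2.1 ⟨hx.1, fun h => hx.2 (Or.inr h)⟩⟩
      exact ((X.2.diff (Finset.finite_toSet _)).mono hsub)
    · -- X ∈ EllSet (α ∪ β) (M ∩ N)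
      refine ⟨?_, ?_, ?_⟩
      · rw [Finset.coe_union]; exact Set.union_subset hX1.1 hX2.1
      · intro x hx
        rw [Finset.coe_union] at hx
        exact ⟨hX1.2.1 ⟨hx.1, fun h => hx.2 (Or.inl h)⟩,
          hX2.2.1 ⟨hx.1, fun h => hx.2 (Or.inr h)⟩⟩
      · intro a ha b hb hbαβ
        rw [Finset.mem_union] at ha hbαβ
        push_neg at hbαβ
        rcases ha with h | h
        · exact hX1.2.2 a h b hb hbαβ.1
        · exact hX2.2.2 a h b hb hbαβ.2
    · have hXαβ : ↑(α ∪ β) ⊆ X.1 := by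
        rw [Finset.coe_union]; exact Set.union_subset hX1.1 hX2.1
      exact Set.subset_inter
        (ell_sub hX1 Finset.subset_union_left hXαβ Set.inter_subset_left)
        (ell_sub hX2 Finset.subset_union_right hXαβ Set.inter_subset_right)
  · apply Set.eq_univ_of_univ_subset
    intro X _
    exact Set.mem_sUnion.2 ⟨EllSet ∅ Set.univ, ⟨∅, Set.univ, Set.infinite_univ, rfl⟩,
      by simp [EllSet]⟩

/- ### combinatorial machinery -/

def accepts (U : Set InfNat) (L : Set ℕ) (β : Finset ℕ) : Prop := EllSet β L ⊆ U

def rejects (U : Set InfNat) (L : Set ℕ) (β : Finset ℕ) : Prop :=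
  ∀ L' ⊆ L, L'.Infinite → ¬ accepts U L' β

lemma accepts_mono {U : Set InfNat} {L L' : Set ℕ} {β : Finset ℕ} (h : L' ⊆ L)
    (ha : accepts U L β) : accepts U L' β := fun X hX => ha (ellSet_mono_s17 h hX)

lemma rejects_mono {U : Set InfNat} {L L' : Set ℕ} {β : Finset ℕ} (h : L' ⊆ L)
    (hr : rejects U L β) : rejects U L' β := fun N hN hNi => hr N (hN.trans h) hNi

/-- Folding finitely many hereditary shrink operations. -/
lemma shrink_fold {ι : Type} (N : Set ℕ) (hN : N.Infinite) (t : Finset ι)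
    (P : ι → Set ℕ → Prop)
    (hered : ∀ i L L', L' ⊆ L → P i L → P i L')
    (oracle : ∀ i ∈ t, ∀ L, L ⊆ N → L.Infinite → ∃ L' ⊆ L, L'.Infinite ∧ P i L') :
    ∃ L ⊆ N, L.Infinite ∧ ∀ i ∈ t, P i L := by
  classical
  induction t using Finset.induction_on with
  | empty => exact ⟨N, Set.Subset.rfl, hN, by simp⟩
  | insert _ _ hni ih =>
    rename_i i t'
    obtain ⟨L, hLN, hLi, hL⟩ := ih (fun j hj => oracle j (Finset.mem_insert_of_mem hj))
    obtain ⟨L', hL'L, hL'i, hP⟩ := oracle i (Finset.mem_insert_self i t') L hLN hLi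
    refine ⟨L', hL'L.trans hLN, hL'i, ?_⟩
    intro j hj
    rcases Finset.mem_insert.1 hj with rfl | hj
    · exact hP
    · exact hered j L L' hL'L (hL j hj)

/-- The master fusion lemma: builds an increasing sequence `n 0 < n 1 < ...` inside `M`
along with a fusion of shrinking sets witnessing the stage-properties `Q`. -/
lemma masterFusion (Q : ℕ → Finset ℕ → Set ℕ → Prop) (M : Set ℕ) (hM : M.Infinite)
    (b₀ : ℕ) (hbase : Q 0 ∅ M)
    (hered : ∀ k s L L', L' ⊆ L → Q k s L → Q k s L')
    (hstep : ∀ (k : ℕ) (pts : Finset ℕ) (N : Set ℕ), N.Infinite →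
      (∀ s ⊆ pts, Q k s N) → ∀ b : ℕ,
      ∃ n, b < n ∧ n ∈ N ∧ ∃ L ⊆ N, L.Infinite ∧ (∀ x ∈ L, n < x) ∧
        ∀ s ⊆ insert n pts, Q (k+1) s L) :
    ∃ n : ℕ → ℕ, StrictMono n ∧ (∀ k, n k ∈ M) ∧ (∀ k, b₀ < n k) ∧
      ∀ (k : ℕ) (s : Finset ℕ), s ⊆ Finset.image n (Finset.range k) →
        Q k s {x | ∃ j, k ≤ j ∧ x = n j} := by
  classical
  -- state : (last chosen bound, chosen points, current infinite set)
  let C : ℕ → ℕ × Finset ℕ × Set ℕ → Prop :=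
    fun k st => st.2.2.Infinite ∧ ∀ s ⊆ st.2.1, Q k s st.2.2
  let step : ℕ → ℕ × Finset ℕ × Set ℕ → ℕ × Finset ℕ × Set ℕ := fun k st =>
    if h : C k st then
      let n := (hstep k st.2.1 st.2.2 h.1 h.2 st.1).choose
      let L := (hstep k st.2.1 st.2.2 h.1 h.2 st.1).choose_spec.2.2.choose
      (n, insert n st.2.1, L)
    else st
  let F : ℕ → ℕ × Finset ℕ × Set ℕ := fun k => Nat.rec (b₀, ∅, M) step k
  have hF0 : F 0 = (b₀, ∅, M) := rfl
  have hFsucc : ∀ k, F (k+1) = step k (F k) := fun k => rfl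
  -- the invariant (including `⊆ M`)
  have hInv : ∀ k, C k (F k) ∧ (F k).2.2 ⊆ M ∧
      ((F (k+1)).1 > (F k).1 ∧ (F (k+1)).1 ∈ (F k).2.2 ∧
       (F (k+1)).2.1 = insert (F (k+1)).1 (F k).2.1 ∧
       (F (k+1)).2.2 ⊆ (F k).2.2 ∧ (∀ x ∈ (F (k+1)).2.2, (F (k+1)).1 < x)) := by
    intro k
    induction k with
    | zero =>
      have hC : C 0 (F 0) := by
        refine ⟨hM, ?_⟩
        intro s hs
        rw [hF0] at hs
        simp only [Finset.subset_empty] at hs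
        subst hs; exact hbase
      refine ⟨hC, Set.Subset.rfl, ?_⟩
      have h1 : F (0+1) = step 0 (F 0) := rfl
      rw [h1]
      simp only [step, dif_pos hC]
      obtain ⟨hb, hmem, hspec⟩ := (hstep 0 (F 0).2.1 (F 0).2.2 hC.1 hC.2 (F 0).1).choose_spec
      obtain ⟨hLsub, hLinf, hLgt, hQ⟩ := hspec.choose_spec
      exact ⟨hb, hmem, trivial, hLsub, hLgt⟩
    | succ k ih =>
      obtain ⟨hCk, hsubM, hb, hmem, hpts, hLsub, hLgt⟩ := ih
      have hCk1 : C (k+1) (F (k+1)) := by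
        have h1 : F (k+1) = step k (F k) := rfl
        rw [h1]
        simp only [step, dif_pos hCk]
        obtain ⟨hb', hmem', hspec⟩ := (hstep k (F k).2.1 (F k).2.2 hCk.1 hCk.2 (F k).1).choose_spec
        obtain ⟨hLsub', hLinf', hLgt', hQ'⟩ := hspec.choose_spec
        exact ⟨hLinf', hQ'⟩
      refine ⟨hCk1, hLsub.trans hsubM, ?_⟩
      have h1 : F (k+1+1) = step (k+1) (F (k+1)) := rfl
      rw [h1]
      simp only [step, dif_pos hCk1]
      obtain ⟨hb', hmem', hspec⟩ :=
        (hstep (k+1) (F (k+1)).2.1 (F (k+1)).2.2 hCk1.1 hCk1.2 (F (k+1)).1).choose_spec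
      obtain ⟨hLsub', hLinf', hLgt', hQ'⟩ := hspec.choose_spec
      exact ⟨hb', hmem', trivial, hLsub', hLgt'⟩
  -- the sequence of chosen points
  set n : ℕ → ℕ := fun k => (F (k+1)).1 with hn
  have hmono : StrictMono n := by
    apply strictMono_nat_of_lt_succ
    intro k
    have h1 := (hInv (k+1)).2.2.1  -- (F (k+2)).1 > (F (k+1)).1
    exact h1
  have hMk_chain : ∀ k, (F (k+1)).2.2 ⊆ (F k).2.2 := fun k => (hInv k).2.2.2.2.2.1
  have hMk_mono : ∀ j k, j ≤ k → (F k).2.2 ⊆ (F j).2.2 := by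
    intro j k hjk
    induction k with
    | zero => rw [Nat.le_zero.1 hjk]
    | succ k ih =>
      rcases Nat.lt_or_ge j (k+1) with h | h
      · exact (hMk_chain k).trans (ih (Nat.lt_succ_iff.1 h))
      · rw [Nat.le_antisymm hjk h]
  have hnmem : ∀ k, n k ∈ (F k).2.2 := fun k => (hInv k).2.2.2.1
  have hnM : ∀ k, n k ∈ M := fun k => (hInv k).2.1 (hnmem k)
  have hpts : ∀ k, (F k).2.1 = Finset.image n (Finset.range k) := by
    intro k
    induction k with
    | zero => simp [hF0]
    | succ k ih =>
      have := (hInv k).2.2.2.2.1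
      rw [this, ih, Finset.range_add_one, Finset.image_insert]
  have hb₀ : ∀ k, b₀ < n k := by
    intro k
    induction k with
    | zero => exact (hInv 0).2.2.1
    | succ k ih => exact ih.trans (hmono (Nat.lt_succ_self k))
  refine ⟨n, hmono, hnM, hb₀, ?_⟩
  intro k s hs
  have htail : {x | ∃ j, k ≤ j ∧ x = n j} ⊆ (F k).2.2 := by
    rintro x ⟨j, hj, rfl⟩
    exact hMk_mono k j hj (hnmem j)
  exact hered k s (F k).2.2 _ htail ((hInv k).1.2 s (by rw [← hpts] at hs; exact hs))

/- ### Claim 1: from a rejecting set, a set rejecting all one-point extensions -/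

lemma claim1 (U : Set InfNat) (β : Finset ℕ) (M : Set ℕ) (hM : M.Infinite)
    (hrej : rejects U M β) :
    ∃ L ⊆ M, L.Infinite ∧ ∀ m ∈ L, rejects U L (insert m β) := by
  classical
  obtain ⟨n, hmono, hnM, -, hQ⟩ := masterFusion
    (fun _ s N => ∀ m ∈ s, accepts U N (insert m β) ∨ rejects U N (insert m β)) M hM 0
    (by simp)
    (by
      intro k s L L' hL'L h m hm
      rcases h m hm with h | h
      · exact Or.inl (accepts_mono hL'L h)
      · exact Or.inr (rejects_mono hL'L h))
    (by
      intro k pts N hN hinv b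
      obtain ⟨m, hmN, hbm⟩ := hN.exists_gt b
      by_cases h : ∃ L', L' ⊆ N ∩ Set.Ioi m ∧ L'.Infinite ∧ accepts U L' (insert m β)
      · obtain ⟨L', hL'sub, hL'inf, hL'acc⟩ := h
        refine ⟨m, hbm, hmN, L', hL'sub.trans Set.inter_subset_left, hL'inf,
          fun x hx => (hL'sub hx).2, ?_⟩
        intro s hs m' hm'
        rcases Finset.mem_insert.1 (hs hm') with rfl | hm'pts
        · exact Or.inl hL'acc
        · rcases hinv pts Finset.Subset.rfl m' hm'pts with h' | h'
          · exact Or.inl (accepts_mono (hL'sub.trans Set.inter_subset_left) h')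
          · exact Or.inr (rejects_mono (hL'sub.trans Set.inter_subset_left) h')
      · refine ⟨m, hbm, hmN, N ∩ Set.Ioi m, Set.inter_subset_left,
          inter_Ioi_infinite hN m, fun x hx => hx.2, ?_⟩
        intro s hs m' hm'
        rcases Finset.mem_insert.1 (hs hm') with rfl | hm'pts
        · exact Or.inr (fun L' hL' hinf hacc => h ⟨L', hL', hinf, hacc⟩)
        · rcases hinv pts Finset.Subset.rfl m' hm'pts with h' | h'
          · exact Or.inl (accepts_mono Set.inter_subset_left h')
          · exact Or.inr (rejects_mono Set.inter_subset_left h'))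
  -- the set of "bad" indices whose tail accepts the one-point extension
  set B : Set ℕ := {i | accepts U {x | ∃ j, i + 1 ≤ j ∧ x = n j} (insert (n i) β)} with hB
  have hBfin : B.Finite := by
    by_contra hBinf
    have hBinf : B.Infinite := hBinf
    set L' : Set ℕ := n '' B with hL'
    have hL'M : L' ⊆ M := by rintro x ⟨i, -, rfl⟩; exact hnM i
    have hL'inf : L'.Infinite := hBinf.image (hmono.injective.injOn)
    refine hrej L' hL'M hL'inf ?_
    -- L' accepts β
    intro X hX
    have hne : (X.1 \ ↑β).Nonempty := (X.2.diff (Finset.finite_toSet β)).nonempty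
    set m₀ := sInf (X.1 \ ↑β) with hm₀
    have hm₀mem : m₀ ∈ X.1 \ ↑β := Nat.sInf_mem hne
    obtain ⟨i, hiB, hni⟩ : ∃ i, i ∈ B ∧ n i = m₀ := by
      have := hX.2.1 hm₀mem
      obtain ⟨i, hiB, hni⟩ := this
      exact ⟨i, hiB, hni⟩
    -- X ∈ EllSet (insert (n i) β) (tail (i+1))
    refine hiB ⟨?_, ?_, ?_⟩
    · rw [Finset.coe_insert]
      exact Set.insert_subset (hni ▸ hm₀mem.1) hX.1
    · intro x hx
      have hxβ : x ∉ (β : Set ℕ) := fun h => hx.2 (Finset.mem_coe.1 (by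
        rw [Finset.coe_insert] at *
        exact Set.mem_insert_of_mem _ h))
      have hxL' : x ∈ L' := hX.2.1 ⟨hx.1, hxβ⟩
      obtain ⟨j, hjB, rfl⟩ := hxL'
      have hne' : n j ≠ n i := by
        intro h
        apply hx.2
        rw [Finset.coe_insert, h]
        exact Set.mem_insert _ _
      have : m₀ ≤ n j := Nat.sInf_le ⟨hx.1, hxβ⟩
      have : n i < n j := lt_of_le_of_ne (hni ▸ this) (Ne.symm hne')
      exact ⟨j, hmono.lt_iff_lt.1 this, rfl⟩
    · intro a ha b hb hbins
      have hbβ : b ∉ β := fun h => hbins (Finset.mem_insert_of_mem h)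
      rcases Finset.mem_insert.1 ha with rfl | haβ
      · have : m₀ ≤ b := Nat.sInf_le ⟨hb, hbβ⟩
        rcases lt_or_eq_of_le this with h | h
        · exact hni ▸ h
        · exact absurd (by rw [← h, ← hni]; exact Finset.mem_insert_self _ _) hbins
      · exact hX.2.2 a haβ b hb hbβ
  -- choose a tail avoiding the bad indices
  obtain ⟨i₀, hi₀⟩ : ∃ i₀, ∀ i, i₀ ≤ i → i ∉ B := by
    rcases Set.Finite.bddAbove hBfin with ⟨c, hc⟩
    exact ⟨c + 1, fun i hi hiB => by
      have := hc hiB; omega⟩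
  refine ⟨n '' {j | i₀ ≤ j}, by rintro x ⟨j, -, rfl⟩; exact hnM j,
    (Set.Ici i₀).infinite_of_not_bddAbove (by
      simpa using not_bddAbove_Ici (a := i₀)) |>.image (hmono.injective.injOn), ?_⟩
  rintro m ⟨i, hi, rfl⟩
  have hnotB : i ∉ B := hi₀ i hi
  have hrej_tail : rejects U {x | ∃ j, i + 1 ≤ j ∧ x = n j} (insert (n i) β) := by
    have := hQ (i + 1) {n i} (by
      simp only [Finset.singleton_subset_iff, Finset.mem_image]
      exact ⟨i, Finset.mem_range.2 (Nat.lt_succ_self i), rfl⟩) (n i) (Finset.mem_singleton_self _)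
    rcases this with h | h
    · exact absurd h hnotB
    · exact h
  intro L'' hL'' hinf hacc
  refine hrej_tail (L'' ∩ Set.Ioi (n i)) ?_ (inter_Ioi_infinite hinf _)
    (accepts_mono Set.inter_subset_left hacc)
  rintro x ⟨hx1, hx2⟩
  obtain ⟨j, hj, rfl⟩ := hL'' hx1
  exact ⟨j, hmono.lt_iff_lt.1 hx2, rfl⟩

/- ### Completely Ramsey property for open sets -/

lemma openCR (U : Set InfNat) (hU : @IsOpen InfNat EllentuckTop U) (α : Finset ℕ)
    (M : Set ℕ) (hM : M.Infinite) :
    ∃ L ⊆ M, L.Infinite ∧ (EllSet α L ⊆ U ∨ EllSet α L ∩ U = ∅) := by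
  classical
  letI : TopologicalSpace InfNat := EllentuckTop
  by_cases hacc : ∃ L, L ⊆ M ∧ L.Infinite ∧ accepts U L α
  · obtain ⟨L, h1, h2, h3⟩ := hacc
    exact ⟨L, h1, h2, Or.inl h3⟩
  · have hrej : rejects U M α := fun L hL hLI hA => hacc ⟨L, hL, hLI, hA⟩
    obtain ⟨n, hmono, hnM, -, hQ⟩ := masterFusion
      (fun _ s N => rejects U N (α ∪ s)) M hM 0
      (by simpa using hrej)
      (fun k s L L' h hr => rejects_mono h hr)
      (by
        intro k pts N hN hinv b
        obtain ⟨N₁, hN₁N, hN₁inf, hN₁⟩ := shrink_fold N hN pts.powerset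
          (fun s' N' => ∀ m ∈ N', rejects U N' (insert m (α ∪ s')))
          (fun i L L' h hP m hm => rejects_mono h (hP m (h hm)))
          (by
            intro i hi L hLN hLinf
            have hrej' : rejects U L (α ∪ i) :=
              rejects_mono hLN (hinv i (Finset.mem_powerset.1 hi))
            obtain ⟨L', hL'L, hL'inf, hL'⟩ := claim1 U (α ∪ i) L hLinf hrej'
            exact ⟨L', hL'L, hL'inf, hL'⟩)
        obtain ⟨m, hmN₁, hbm⟩ := hN₁inf.exists_gt b
        refine ⟨m, hbm, hN₁N hmN₁, N₁ ∩ Set.Ioi m, (Set.inter_subset_left).trans hN₁N,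
          inter_Ioi_infinite hN₁inf m, fun x hx => hx.2, ?_⟩
        intro s hs
        by_cases hms : m ∈ s
        · have heq : α ∪ s = insert m (α ∪ s.erase m) := by
            ext x
            simp only [Finset.mem_union, Finset.mem_insert, Finset.mem_erase]
            constructor
            · rintro (h | h)
              · exact Or.inr (Or.inl h)
              · by_cases hxm : x = m
                · exact Or.inl hxm
                · exact Or.inr (Or.inr ⟨hxm, h⟩)
            · rintro (rfl | h | ⟨-, h⟩)
              · exact Or.inr hms
              · exact Or.inl h
              · exact Or.inr h
          rw [heq]
          have herase : s.erase m ∈ pts.powerset := by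
            rw [Finset.mem_powerset]
            intro x hx
            rcases Finset.mem_insert.1 (hs (Finset.mem_of_mem_erase hx)) with rfl | h
            · exact absurd rfl (Finset.ne_of_mem_erase hx)
            · exact h
          exact rejects_mono Set.inter_subset_left (hN₁ _ herase m hmN₁)
        · have hspts : s ⊆ pts := fun x hx =>
            (Finset.mem_insert.1 (hs hx)).resolve_left (by rintro rfl; exact hms hx)
          exact rejects_mono ((Set.inter_subset_left).trans hN₁N) (hinv s hspts))
    refine ⟨Set.range n, by rintro x ⟨j, rfl⟩; exact hnM j,
      Set.infinite_range_of_injective hmono.injective, Or.inr ?_⟩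
    rw [Set.eq_empty_iff_forall_notMem]
    rintro X ⟨hXα, hXU⟩
    obtain ⟨V, ⟨γ, N, hN, rfl⟩, hXγ, hVU⟩ :=
      ellBasis.exists_subset_of_mem_open hXU hU
    set s : Finset ℕ := γ \ α with hs_def
    set β : Finset ℕ := α ∪ s with hβ_def
    have hsX : (s : Set ℕ) ⊆ X.1 \ ↑α := by
      intro x hx
      rw [hs_def] at hx
      simp only [Finset.coe_sdiff, Set.mem_diff, Finset.mem_coe] at hx
      exact ⟨hXγ.1 hx.1, hx.2⟩
    have hsL : (s : Set ℕ) ⊆ Set.range n := fun x hx => hXα.2.1 (hsX hx)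
    -- the stage k at which s is captured
    have hex : ∃ k, s ⊆ Finset.image n (Finset.range k) := by
      refine ⟨s.sup id + 1, ?_⟩
      intro x hx
      obtain ⟨j, hj⟩ := hsL hx
      refine Finset.mem_image.2 ⟨j, Finset.mem_range.2 ?_, hj⟩
      have : j ≤ n j := hmono.le_apply
      have : j ≤ x := hj ▸ this
      exact lt_of_le_of_lt this (Nat.lt_succ_of_le (Finset.le_sup (f := id) hx))
    set k := Nat.find hex with hk_def
    have hk : s ⊆ Finset.image n (Finset.range k) := Nat.find_spec hex
    have hγβ : γ ⊆ β := by
      intro x hx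
      rw [hβ_def, Finset.mem_union, hs_def, Finset.mem_sdiff]
      by_cases h : x ∈ α
      · exact Or.inl h
      · exact Or.inr ⟨hx, h⟩
    have hβX : (β : Set ℕ) ⊆ X.1 := by
      rw [hβ_def, Finset.coe_union]
      exact Set.union_subset hXα.1 (fun x hx => (hsX hx).1)
    have hXβγ : ∀ x ∈ X.1 \ (β : Set ℕ), x ∉ (γ : Set ℕ) := by
      rintro x ⟨hx1, hx2⟩ hxγ
      apply hx2
      exact Finset.mem_coe.2 (hγβ (Finset.mem_coe.1 hxγ))
    -- X.1 \ β lies in the k-th tail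
    have htail : X.1 \ (β : Set ℕ) ⊆ {x | ∃ j, k ≤ j ∧ x = n j} := by
      rintro x ⟨hx1, hx2⟩
      have hxα : x ∉ (α : Set ℕ) := fun h => hx2 (by
        rw [hβ_def, Finset.coe_union]; exact Or.inl h)
      obtain ⟨j, rfl⟩ := hXα.2.1 ⟨hx1, hxα⟩
      refine ⟨j, ?_, rfl⟩
      rcases Nat.eq_zero_or_pos k with h0 | hpos
      · omega
      · obtain ⟨k', hk'⟩ : ∃ k', k = k' + 1 := ⟨k - 1, by omega⟩
        have hmin : ¬ s ⊆ Finset.image n (Finset.range k') :=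
          Nat.find_min hex (by rw [← hk_def]; omega)
        obtain ⟨y, hys, hyk'⟩ := Finset.not_subset.1 hmin
        have hyim : y ∈ Finset.image n (Finset.range (k' + 1)) := hk' ▸ hk hys
        obtain ⟨j', hj', rfl⟩ := Finset.mem_image.1 hyim
        have hj'e : j' = k' := by
          rcases Nat.lt_succ_iff_lt_or_eq.1 (Finset.mem_range.1 hj') with h | h
          · exact absurd (Finset.mem_image.2 ⟨j', Finset.mem_range.2 h, rfl⟩) hyk'
          · exact h
        subst hj'e
        -- n j' ∈ s ⊆ γ, and x = n j ∈ X.1 \ γ, so n j' < n j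
        have hxγ : n j ∉ (γ : Set ℕ) := hXβγ _ ⟨hx1, hx2⟩
        have : n j' < n j := hXγ.2.2 (n j') (Finset.mem_sdiff.1 hys).1 (n j) hx1
          (fun h => hxγ h)
        have := hmono.lt_iff_lt.1 this
        omega
    -- the tail rejects β, but X.1 \ β accepts it
    have hrej_tail := hQ k s hk
    refine hrej_tail (X.1 \ ↑β) htail (X.2.diff (Finset.finite_toSet β)) ?_
    -- accepts U (X.1 \ β) β
    have : EllSet β (X.1 \ ↑β) ⊆ EllSet γ N := by
      apply ell_sub hXγ hγβ hβX
      intro x hx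
      exact hXγ.2.1 ⟨hx.1, fun h => hXβγ x hx h⟩
    exact fun Y hY => hVU (this hY)

/- ### nowhere dense and meagre sets are Ramsey null -/

lemma nwd_shrink (S : Set InfNat) (hS : @IsNowhereDense InfNat EllentuckTop S)
    (β : Finset ℕ) (M : Set ℕ) (hM : M.Infinite) :
    ∃ L ⊆ M, L.Infinite ∧ EllSet β L ∩ S = ∅ := by
  letI : TopologicalSpace InfNat := EllentuckTop
  obtain ⟨L, hLM, hLinf, h⟩ := openCR (closure S)ᶜ isClosed_closure.isOpen_compl β M hM
  rcases h with h | h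
  · refine ⟨L, hLM, hLinf, ?_⟩
    rw [Set.eq_empty_iff_forall_notMem]
    rintro X ⟨hX1, hX2⟩
    exact h hX1 (subset_closure hX2)
  · exfalso
    have hsub : EllSet β L ⊆ closure S := by
      intro X hX
      by_contra hXc
      exact Set.eq_empty_iff_forall_notMem.1 h X ⟨hX, hXc⟩
    obtain ⟨Y, hY⟩ := ellSet_nonempty (α := β) hLinf
    have : EllSet β L ⊆ interior (closure S) :=
      (ellSet_isOpen hLinf).subset_interior_iff.2 hsub
    rw [hS] at this
    exact this hY

lemma meager_null (S : Set InfNat) (hS : @IsMeagre InfNat EllentuckTop S)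
    (α : Finset ℕ) (M : Set ℕ) (hM : M.Infinite) :
    ∃ L ⊆ M, L.Infinite ∧ EllSet α L ∩ S = ∅ := by
  classical
  letI : TopologicalSpace InfNat := EllentuckTop
  rw [isMeagre_iff_countable_union_isNowhereDense] at hS
  obtain ⟨𝒮, h𝒮nwd, h𝒮c, hsub⟩ := hS
  obtain ⟨g, hg⟩ := (h𝒮c.insert ∅).exists_eq_range ⟨∅, Set.mem_insert _ _⟩
  have hgnwd : ∀ j, IsNowhereDense (g j) := by
    intro j
    have : g j ∈ insert ∅ 𝒮 := hg ▸ Set.mem_range_self j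
    rcases Set.mem_insert_iff.1 this with h | h
    · rw [h]; exact isNowhereDense_empty
    · exact h𝒮nwd _ h
  have hSsub : S ⊆ ⋃ j, g j := by
    refine hsub.trans ?_
    rw [← Set.sUnion_range, ← hg]
    exact Set.sUnion_subset_sUnion (Set.subset_insert _ _)
  obtain ⟨n, hmono, hnM, -, hQ⟩ := masterFusion
    (fun k s N => ∀ j < k, EllSet (α ∪ s) N ∩ g j = ∅) M hM 0
    (by intro j hj; omega)
    (by
      intro k s L L' h hQ j hj
      rw [Set.eq_empty_iff_forall_notMem]
      rintro X ⟨hX1, hX2⟩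
      exact Set.eq_empty_iff_forall_notMem.1 (hQ j hj) X ⟨ellSet_mono_s17 h hX1, hX2⟩)
    (by
      intro k pts N hN hinv b
      obtain ⟨m, hmN, hbm⟩ := hN.exists_gt b
      obtain ⟨N₁, hN₁N, hN₁inf, hN₁⟩ := shrink_fold N hN
        ((insert m pts).powerset ×ˢ Finset.range (k+1))
        (fun p N' => EllSet (α ∪ p.1) N' ∩ g p.2 = ∅)
        (by
          intro i L L' h hP
          rw [Set.eq_empty_iff_forall_notMem]
          rintro X ⟨hX1, hX2⟩
          exact Set.eq_empty_iff_forall_notMem.1 hP X ⟨ellSet_mono_s17 h hX1, hX2⟩)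
        (fun p _ L hLN hLinf => nwd_shrink (g p.2) (hgnwd p.2) (α ∪ p.1) L hLinf)
      refine ⟨m, hbm, hmN, N₁ ∩ Set.Ioi m, Set.inter_subset_left.trans hN₁N,
        inter_Ioi_infinite hN₁inf m, fun x hx => hx.2, ?_⟩
      intro s hs j hj
      have hmem : (s, j) ∈ (insert m pts).powerset ×ˢ Finset.range (k+1) :=
        Finset.mem_product.2 ⟨Finset.mem_powerset.2 hs, Finset.mem_range.2 hj⟩
      rw [Set.eq_empty_iff_forall_notMem]
      rintro X ⟨hX1, hX2⟩
      exact Set.eq_empty_iff_forall_notMem.1 (hN₁ _ hmem) X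
        ⟨ellSet_mono_s17 Set.inter_subset_left hX1, hX2⟩)
  refine ⟨Set.range n, by rintro x ⟨j, rfl⟩; exact hnM j,
    Set.infinite_range_of_injective hmono.injective, ?_⟩
  rw [Set.eq_empty_iff_forall_notMem]
  rintro X ⟨hXα, hXS⟩
  obtain ⟨j, hj⟩ := Set.mem_iUnion.1 (hSsub hXS)
  set s : Finset ℕ := (Finset.image n (Finset.range (j+1))).filter (· ∈ X.1) with hs_def
  have hs_im : s ⊆ Finset.image n (Finset.range (j+1)) := Finset.filter_subset _ _
  have hdisj := hQ (j+1) s hs_im j (Nat.lt_succ_self j)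
  apply Set.eq_empty_iff_forall_notMem.1 hdisj X
  refine ⟨⟨?_, ?_, ?_⟩, hj⟩
  · rw [Finset.coe_union]
    refine Set.union_subset hXα.1 ?_
    intro x hx
    exact (Finset.mem_filter.1 hx).2
  · rintro x ⟨hx1, hx2⟩
    rw [Finset.coe_union] at hx2
    have hxα : x ∉ (α : Set ℕ) := fun h => hx2 (Or.inl h)
    obtain ⟨i, rfl⟩ := hXα.2.1 ⟨hx1, hxα⟩
    refine ⟨i, ?_, rfl⟩
    by_contra hik
    push_neg at hik
    exact hx2 (Or.inr (Finset.mem_coe.2 (Finset.mem_filter.2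
      ⟨Finset.mem_image.2 ⟨i, Finset.mem_range.2 hik, rfl⟩, hx1⟩)))
  · intro a ha b hb hbs
    rcases Finset.mem_union.1 ha with h | h
    · refine hXα.2.2 a h b hb ?_
      intro hbα
      exact hbs (Finset.mem_union.2 (Or.inl hbα))
    · obtain ⟨i', hi', rfl⟩ := Finset.mem_image.1 (hs_im h)
      have hbα : b ∉ (α : Set ℕ) := fun hh => hbs (Finset.mem_union.2 (Or.inl hh))
      obtain ⟨i, rfl⟩ := hXα.2.1 ⟨hb, hbα⟩
      have hik : ¬ i < j + 1 := by
        intro hik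
        exact hbs (Finset.mem_union.2 (Or.inr (Finset.mem_filter.2
          ⟨Finset.mem_image.2 ⟨i, Finset.mem_range.2 hik, rfl⟩, hb⟩)))
      have hi'2 := Finset.mem_range.1 hi'
      exact hmono (by omega : i' < i)


/-- Ellentuck's theorem: `U` is completely Ramsey iff `U` has the Baire property in the
Ellentuck topology (i.e. differs from an open set by a meager set). -/
theorem ellentuck (U : Set InfNat) :
    CompletelyRamsey U ↔
      ∃ O : Set InfNat, @IsOpen InfNat EllentuckTop O ∧
        @IsMeagre InfNat EllentuckTop (symmDiff U O) := by
  letI : TopologicalSpace InfNat := EllentuckTop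
  constructor
  · intro hCR
    set O : Set InfNat :=
      ⋃₀ {V | (∃ (γ : Finset ℕ) (N : Set ℕ), N.Infinite ∧ V = EllSet γ N) ∧ V ⊆ U} with hO_def
    have hO : IsOpen O := isOpen_sUnion (fun V hV => TopologicalSpace.GenerateOpen.basic V hV.1)
    have hOU : O ⊆ U := by
      rintro X ⟨V, hV, hXV⟩
      exact hV.2 hXV
    have hsymm : symmDiff U O = U \ O := by
      rw [Set.symmDiff_def, Set.diff_eq_empty.2 hOU, Set.union_empty]
    have hnwd : IsNowhereDense (U \ O) := by
      rw [IsNowhereDense, Set.eq_empty_iff_forall_notMem]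
      intro X hX
      obtain ⟨V, ⟨γ, N, hN, rfl⟩, hXV, hVsub⟩ :=
        ellBasis.exists_subset_of_mem_open hX isOpen_interior
      obtain ⟨L, hLN, hLinf, hcase⟩ := hCR γ N hN
      have hdisj : EllSet γ L ∩ (U \ O) = ∅ := by
        rw [Set.eq_empty_iff_forall_notMem]
        rintro Y ⟨hY1, hY2⟩
        rcases hcase with h | h
        · exact hY2.2 ⟨EllSet γ L, ⟨⟨γ, L, hLinf, rfl⟩, h⟩, hY1⟩
        · exact h hY1 hY2.1
      obtain ⟨Y, hY⟩ := ellSet_nonempty (α := γ) hLinf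
      have hYcl : Y ∈ closure (U \ O) := interior_subset (hVsub (ellSet_mono_s17 hLN hY))
      rw [mem_closure_iff] at hYcl
      obtain ⟨Z, hZ⟩ := hYcl (EllSet γ L) (ellSet_isOpen hLinf) hY
      exact Set.eq_empty_iff_forall_notMem.1 hdisj Z hZ
    refine ⟨O, hO, ?_⟩
    rw [isMeagre_iff_countable_union_isNowhereDense]
    refine ⟨{U \ O}, ?_, Set.countable_singleton _, ?_⟩
    · intro t ht
      rw [Set.mem_singleton_iff.1 ht]
      exact hnwd
    · rw [hsymm, Set.sUnion_singleton]
  · rintro ⟨O, hO, hmeag⟩ α M hM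
    obtain ⟨L₁, hL₁M, hL₁inf, hd⟩ := meager_null _ hmeag α M hM
    obtain ⟨L, hLL₁, hLinf, hcase⟩ := openCR O hO α L₁ hL₁inf
    refine ⟨L, hLL₁.trans hL₁M, hLinf, ?_⟩
    have hnod : ∀ X ∈ EllSet α L, X ∉ symmDiff U O := fun X hX hXs =>
      Set.eq_empty_iff_forall_notMem.1 hd X ⟨ellSet_mono_s17 hLL₁ hX, hXs⟩
    rcases hcase with h | h
    · refine Or.inl (fun X hX => ?_)
      by_contra hXU
      exact hnod X hX (Set.mem_symmDiff.2 (Or.inr ⟨h hX, hXU⟩))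
    · refine Or.inr (fun X hX hXU => ?_)
      have hXO : X ∉ O := fun hXO => Set.eq_empty_iff_forall_notMem.1 h X ⟨hX, hXO⟩
      exact hnod X hX (Set.mem_symmDiff.2 (Or.inl ⟨hXU, hXO⟩))
end

section
/- If U is a family of infinite subsets of ℕ that is meager in the Ellentuck topology, then for every infinite M ⊆ ℕ and finite α ⊆ ℕ there exists an infinite L ⊆ M with [α, L] ⊆ [ℕ] \ U. -/
open Set Filter

lemma exists_isOpen_dense_iInter_subset_of_mem_residual {X : Type*} [TopologicalSpace X]
    {s : Set X} (hs : s ∈ residual X) :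
    ∃ D : ℕ → Set X, (∀ k, IsOpen (D k)) ∧ (∀ k, Dense (D k)) ∧ ⋂ k, D k ⊆ s := by
  obtain ⟨S, hSo, hSd, hSc, hSs⟩ := mem_residual_iff.1 hs
  obtain ⟨D, hD⟩ := (hSc.insert univ).exists_eq_range (insert_nonempty _ _)
  have hDS (k : ℕ) : D k = univ ∨ D k ∈ S := mem_insert_iff.1 (hD ▸ mem_range_self k)
  refine ⟨D, fun k => ?_, fun k => ?_, (subset_sInter fun t ht => ?_).trans hSs⟩
  · rcases hDS k with h | h
    exacts [h ▸ isOpen_univ, hSo _ h]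
  · rcases hDS k with h | h
    exacts [h ▸ dense_univ, hSd _ h]
  · obtain ⟨k, rfl⟩ : t ∈ range D := hD ▸ mem_insert_of_mem _ ht
    exact iInter_subset _ k

namespace Ellentuck

def tail (L : Set ℕ) (t : Finset ℕ) : Set ℕ := {n ∈ L | ∀ a ∈ t, a < n}

lemma mem_tail {L : Set ℕ} {t : Finset ℕ} {n : ℕ} : n ∈ tail L t ↔ n ∈ L ∧ ∀ a ∈ t, a < n :=
  Iff.rfl

lemma tail_subset (L : Set ℕ) (t : Finset ℕ) : tail L t ⊆ L := fun _ hn => hn.1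

lemma tail_mono {L N : Set ℕ} (h : L ⊆ N) (t : Finset ℕ) : tail L t ⊆ tail N t :=
  fun _ hn => ⟨h hn.1, hn.2⟩

lemma infinite_tail {L : Set ℕ} (hL : L.Infinite) (t : Finset ℕ) : (tail L t).Infinite :=
  (hL.sdiff (finite_Iic (t.sup id))).mono fun _ hn =>
    ⟨hn.1, fun _ ha => (Finset.le_sup (f := id) ha).trans_lt (not_le.1 hn.2)⟩

lemma exists_subset_forall_finset {ι : Type*} (P : ι → Set ℕ → Prop)
    (hmono : ∀ i {L N}, L ⊆ N → P i N → P i L)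
    (hex : ∀ i N, N.Infinite → ∃ L ⊆ N, L.Infinite ∧ P i L) (s : Finset ι) {M : Set ℕ}
    (hM : M.Infinite) :
    ∃ L ⊆ M, L.Infinite ∧ ∀ i ∈ s, P i L := by
  classical
  induction s using Finset.induction_on with
  | empty => exact ⟨M, subset_rfl, hM, by simp⟩
  | insert i s _ ih =>
    obtain ⟨L, hLM, hL, hLs⟩ := ih
    obtain ⟨L', hL'L, hL', hL'i⟩ := hex i L hL
    refine ⟨L', hL'L.trans hLM, hL', (Finset.forall_mem_insert _ _ _).2 ⟨hL'i, ?_⟩⟩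
    exact fun j hj => hmono j hL'L (hLs j hj)

lemma exists_subset_forall_powerset_range (P : Finset ℕ → Set ℕ → Prop)
    (hmono : ∀ t {L N}, L ⊆ N → P t N → P t L)
    (hex : ∀ t N, N.Infinite → ∃ L ⊆ N, L.Infinite ∧ P t L) (c : ℕ) (N : Set ℕ) :
    ∃ N' ⊆ N, N.Infinite → N'.Infinite ∧ ∀ t ∈ (Finset.range c).powerset, P t N' := by
  by_cases hN : N.Infinite
  · obtain ⟨N', hN'N, hN', hP⟩ :=
      exists_subset_forall_finset P hmono hex (Finset.range c).powerset hN
    exact ⟨N', hN'N, fun _ => ⟨hN', hP⟩⟩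
  · exact ⟨N, subset_rfl, fun h => absurd h hN⟩

theorem exists_fusion (P : Finset ℕ → Set ℕ → Prop) (hmono : ∀ t {L N}, L ⊆ N → P t N → P t L)
    (hex : ∀ t N, N.Infinite → ∃ L ⊆ N, L.Infinite ∧ P t L) {M : Set ℕ} (hM : M.Infinite) :
    ∃ L ⊆ M, L.Infinite ∧ ∀ t : Finset ℕ, ↑t ⊆ L → P t (tail L t) := by
  choose G hG_sub hG using exists_subset_forall_powerset_range P hmono hex
  -- Stage `i + 1` fixes the `i`-th element `n i = min (N i)` of `L` and then secures `P t` for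
  -- every `t` lying below it.
  set N : ℕ → Set ℕ := fun i => (fun N' => G (sInf N' + 1) (tail N' {sInf N'}))^[i] (G 0 M)
  set n : ℕ → ℕ := fun i => sInf (N i)
  have hN_succ (i : ℕ) : N (i + 1) = G (n i + 1) (tail (N i) {n i}) :=
    Function.iterate_succ_apply' _ _ _
  have hN_inf (i : ℕ) : (N i).Infinite := by
    induction i with
    | zero => exact (hG 0 M hM).1
    | succ i ih => exact hN_succ i ▸ (hG _ _ (infinite_tail ih _)).1
  have hN_tail (i : ℕ) : N (i + 1) ⊆ tail (N i) {n i} := hN_succ i ▸ hG_sub _ _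
  have hN_anti : Antitone N :=
    antitone_nat_of_succ_le fun i => (hN_tail i).trans (tail_subset _ _)
  have hn_mem (i : ℕ) : n i ∈ N i := Nat.sInf_mem (hN_inf i).nonempty
  have hn_mono : StrictMono n := strictMono_nat_of_lt_succ fun i =>
    (hN_tail i (hn_mem (i + 1))).2 _ (Finset.mem_singleton_self _)
  have hP_succ (i : ℕ) (t : Finset ℕ) (ht : ∀ a ∈ t, a ≤ n i) : P t (N (i + 1)) := by
    rw [hN_succ]
    refine (hG _ _ (infinite_tail (hN_inf i) _)).2 t (Finset.mem_powerset.2 fun a ha => ?_)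
    exact Finset.mem_range.2 (Nat.lt_succ_of_le (ht a ha))
  refine ⟨range n, ?_, infinite_range_of_injective hn_mono.injective, fun t ht => ?_⟩
  · rintro _ ⟨i, rfl⟩
    exact hG_sub 0 M (hN_anti (Nat.zero_le i) (hn_mem i))
  rcases t.eq_empty_or_nonempty with rfl | hne
  · refine hmono ∅ (fun x hx => ?_) ((hG 0 M hM).2 ∅ (by simp))
    obtain ⟨j, rfl⟩ := hx.1
    exact hN_anti (Nat.zero_le j) (hn_mem j)
  · obtain ⟨i, hi⟩ := ht (t.max'_mem hne)
    refine hmono t (fun x hx => ?_) (hP_succ i t fun a ha => hi ▸ t.le_max' a ha)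
    obtain ⟨j, rfl⟩ := hx.1
    have hij : i < j := hn_mono.lt_iff_lt.1 (hi ▸ hx.2 _ (t.max'_mem hne))
    exact hN_anti hij (hn_mem j)

lemma ellSet_mono {L N : Set ℕ} (h : L ⊆ N) (γ : Finset ℕ) : EllSet γ L ⊆ EllSet γ N :=
  fun _ hX => ⟨hX.1, hX.2.1.trans h, hX.2.2⟩

lemma ellSet_nonempty {L : Set ℕ} (hL : L.Infinite) (γ : Finset ℕ) : (EllSet γ L).Nonempty := by
  refine ⟨⟨↑γ ∪ tail L γ, (infinite_tail hL γ).mono subset_union_right⟩, subset_union_left, ?_, ?_⟩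
  · rintro b ⟨hb | hb, hbγ⟩
    exacts [absurd hb hbγ, hb.1]
  · rintro a ha b (hb | hb) hbγ
    exacts [absurd hb hbγ, hb.2 a ha]

lemma coe_subset_of_eq_inter_sdiff {α t : Finset ℕ} {L : Set ℕ} {X : InfNat} {c : ℕ}
    (hX : X ∈ EllSet α L) (ht : ↑t = (X.1 ∩ Iio c) \ α) : ↑t ⊆ L :=
  ht ▸ fun _ ha => hX.2.1 ⟨ha.1.1, ha.2⟩

lemma mem_ellSet_union_tail {α t : Finset ℕ} {L : Set ℕ} {X : InfNat} {c : ℕ}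
    (hX : X ∈ EllSet α L) (ht : ↑t = (X.1 ∩ Iio c) \ α) : X ∈ EllSet (α ∪ t) (tail L t) := by
  have ht_lt : ∀ a ∈ t, a < c := fun a ha =>
    (show a ∈ (X.1 ∩ Iio c) \ α from ht ▸ Finset.mem_coe.2 ha).1.2
  have hge : ∀ b ∈ X.1, b ∉ α ∪ t → c ≤ b := by
    intro b hb hbt
    by_contra! hbc
    have hbt' : b ∈ (↑t : Set ℕ) := ht ▸ ⟨⟨hb, hbc⟩, fun h => hbt (Finset.mem_union_left _ h)⟩
    exact hbt (Finset.mem_union_right _ hbt')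
  refine ⟨?_, fun b hb => ?_, fun a ha b hb hbt => ?_⟩
  · rw [Finset.coe_union, ht]
    exact union_subset hX.1 fun b hb => hb.1.1
  · have hbt : b ∉ α ∪ t := by simpa using hb.2
    exact mem_tail.2 ⟨hX.2.1 ⟨hb.1, fun h => hbt (Finset.mem_union_left _ h)⟩,
      fun a ha => (ht_lt a ha).trans_le (hge b hb.1 hbt)⟩
  · rcases Finset.mem_union.1 ha with ha | ha
    · exact hX.2.2 a ha b hb fun h => hbt (Finset.mem_union_left _ h)
    · exact (ht_lt a ha).trans_le (hge b hb hbt)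

lemma mem_ellSet_insert_sInf {γ : Finset ℕ} {N : Set ℕ} {X : InfNat} (hX : X ∈ EllSet γ N) :
    X ∈ EllSet (insert (sInf (X.1 \ γ)) γ) (tail N {sInf (X.1 \ γ)}) := by
  set m := sInf (X.1 \ γ)
  have hm : m ∈ X.1 \ γ := Nat.sInf_mem (X.2.sdiff γ.finite_toSet).nonempty
  have hlt : ∀ b ∈ X.1, b ∉ insert m γ → m < b := by
    intro b hb hbγ
    have hbX : b ∈ X.1 \ γ := ⟨hb, fun h => hbγ (Finset.mem_insert_of_mem h)⟩
    exact (Nat.sInf_le hbX).lt_of_ne fun h => hbγ (h ▸ Finset.mem_insert_self _ _)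
  refine ⟨?_, fun b hb => ?_, fun a ha b hb hbγ => ?_⟩
  · rw [Finset.coe_insert]
    exact insert_subset hm.1 hX.1
  · have hbγ : b ∉ insert m γ := by simpa using hb.2
    exact mem_tail.2 ⟨hX.2.1 ⟨hb.1, fun h => hbγ (Finset.mem_insert_of_mem h)⟩,
      by simpa using hlt b hb.1 hbγ⟩
  · rcases Finset.mem_insert.1 ha with rfl | ha
    · exact hlt b hb hbγ
    · exact hX.2.2 a ha b hb fun h => hbγ (Finset.mem_insert_of_mem h)

/-- The Ellentuck neighbourhood `[X ∩ c, X]` of `X`. -/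
def cone (X : InfNat) (c : ℕ) : Set InfNat := {Y | Y.1 ⊆ X.1 ∧ X.1 ∩ Iio c ⊆ Y.1}

lemma cone_subset_ellSet {γ : Finset ℕ} {N : Set ℕ} {X : InfNat} (hX : X ∈ EllSet γ N) {c : ℕ}
    (hc : ∀ a ∈ γ, a < c) : cone X c ⊆ EllSet γ N := by
  rintro Y ⟨hYX, hXY⟩
  have hγY : ↑γ ⊆ Y.1 := fun a ha => hXY ⟨hX.1 ha, hc a ha⟩
  exact ⟨hγY, fun b hb => hX.2.1 ⟨hYX hb.1, hb.2⟩,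
    fun a ha b hb hbγ => hX.2.2 a ha b (hYX hb) hbγ⟩

lemma ellSet_diff_subset_cone {γ : Finset ℕ} {X : InfNat} {c : ℕ} (hγX : ↑γ ⊆ X.1)
    (hXγ : X.1 ∩ Iio c ⊆ γ) : EllSet γ (X.1 \ γ) ⊆ cone X c := by
  intro Y hY
  have hYX : Y.1 ⊆ X.1 := fun y hy => by
    by_cases hyγ : y ∈ (γ : Set ℕ)
    exacts [hγX hyγ, (hY.2.1 ⟨hy, hyγ⟩).1]
  exact ⟨hYX, hXγ.trans hY.1⟩

section AcceptReject

variable (D : Set InfNat)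

def Accepts (γ : Finset ℕ) (N : Set ℕ) : Prop := EllSet γ N ⊆ D

def Rejects (γ : Finset ℕ) (N : Set ℕ) : Prop := ∀ L ⊆ N, L.Infinite → ¬Accepts D γ L

variable {D}

lemma Accepts.mono {γ : Finset ℕ} {L N : Set ℕ} (h : Accepts D γ N) (hLN : L ⊆ N) :
    Accepts D γ L :=
  (ellSet_mono hLN γ).trans h

lemma Rejects.mono {γ : Finset ℕ} {L N : Set ℕ} (h : Rejects D γ N) (hLN : L ⊆ N) :
    Rejects D γ L :=
  fun L' hL'L => h L' (hL'L.trans hLN)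

lemma exists_accepts_or_rejects (γ : Finset ℕ) {N : Set ℕ} (hN : N.Infinite) :
    ∃ L ⊆ N, L.Infinite ∧ (Accepts D γ L ∨ Rejects D γ L) := by
  by_cases h : Rejects D γ N
  · exact ⟨N, subset_rfl, hN, Or.inr h⟩
  · simp only [Rejects, not_forall, not_not] at h
    obtain ⟨L, hLN, hL, hacc⟩ := h
    exact ⟨L, hLN, hL, Or.inl hacc⟩

lemma finite_not_rejects_insert {β : Finset ℕ} {L : Set ℕ}
    (hdec : ∀ s : Finset ℕ, ↑s ⊆ L →
      Accepts D (β ∪ s) (tail L s) ∨ Rejects D (β ∪ s) (tail L s))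
    {t : Finset ℕ} (ht : ↑t ⊆ L) (hrej : Rejects D (β ∪ t) (tail L t)) :
    {n ∈ tail L t | ¬Rejects D (β ∪ insert n t) (tail L (insert n t))}.Finite := by
  classical
  by_contra hinf
  refine hrej _ (sep_subset _ _) hinf fun X hX => ?_
  set n := sInf (X.1 \ ↑(β ∪ t))
  have hn : n ∈ {n ∈ tail L t | ¬Rejects D (β ∪ insert n t) (tail L (insert n t))} :=
    hX.2.1 (Nat.sInf_mem (X.2.sdiff (Finset.finite_toSet _)).nonempty)
  have hnt : ↑(insert n t) ⊆ L := Finset.coe_insert n t ▸ insert_subset hn.1.1 ht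
  refine (hdec _ hnt).resolve_right hn.2 ?_
  rw [Finset.union_insert]
  refine ellSet_mono (fun m hm => ?_) _ (mem_ellSet_insert_sInf hX)
  exact mem_tail.2 ⟨hm.1.1.1, (Finset.forall_mem_insert _ _ _).2
    ⟨hm.2 n (Finset.mem_singleton_self n), hm.1.1.2⟩⟩

end AcceptReject

section Topology

attribute [local instance] EllentuckTop

lemma isOpen_ellSet {L : Set ℕ} (hL : L.Infinite) (γ : Finset ℕ) : IsOpen (EllSet γ L) :=
  TopologicalSpace.GenerateOpen.basic _ ⟨γ, L, hL, rfl⟩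

lemma IsOpen.eventually_cone_subset {O : Set InfNat} (hO : IsOpen O) {X : InfNat} (hX : X ∈ O) :
    ∀ᶠ c in atTop, cone X c ⊆ O := by
  induction hO with
  | basic O hO =>
    obtain ⟨γ, N, -, rfl⟩ := hO
    filter_upwards [eventually_gt_atTop (γ.sup id)] with c hc
    exact cone_subset_ellSet hX fun a ha => (Finset.le_sup (f := id) ha).trans_lt hc
  | univ => exact Eventually.of_forall fun _ => subset_univ _
  | inter O₁ O₂ _ _ ih₁ ih₂ =>
    filter_upwards [ih₁ hX.1, ih₂ hX.2] with c h₁ h₂ using subset_inter h₁ h₂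
  | sUnion S _ ih =>
    obtain ⟨O, hOS, hXO⟩ := hX
    filter_upwards [ih O hOS hXO] with c hc using hc.trans (subset_sUnion_of_mem hOS)

lemma exists_not_rejects_of_mem_isOpen {D : Set InfNat} (hD : IsOpen D) {β : Finset ℕ}
    {L : Set ℕ} {X : InfNat} (hXD : X ∈ D) (hXL : X ∈ EllSet β L) :
    ∃ t : Finset ℕ, ↑t ⊆ L ∧ ¬Rejects D (β ∪ t) (tail L t) := by
  obtain ⟨c, hc⟩ := (IsOpen.eventually_cone_subset hD hXD).exists
  obtain ⟨t, ht⟩ := ((finite_Iio c).inter_of_right X.1).sdiff (t := ↑β) |>.exists_finset_coe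
  have hXt := mem_ellSet_union_tail hXL ht
  refine ⟨t, coe_subset_of_eq_inter_sdiff hXL ht, fun hrej => ?_⟩
  have hcone : EllSet (β ∪ t) (X.1 \ ↑(β ∪ t)) ⊆ D := by
    refine (ellSet_diff_subset_cone hXt.1 fun b hb => ?_).trans hc
    rw [Finset.coe_union, ht]
    exact (em (b ∈ (β : Set ℕ))).imp id fun hbβ => ⟨hb, hbβ⟩
  exact hrej _ hXt.2.1 (X.2.sdiff (Finset.finite_toSet _)) hcone

theorem exists_ellSet_subset_of_isOpen_of_dense {D : Set InfNat} (hDo : IsOpen D) (hDd : Dense D)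
    (β : Finset ℕ) {M : Set ℕ} (hM : M.Infinite) : ∃ L ⊆ M, L.Infinite ∧ EllSet β L ⊆ D := by
  obtain ⟨L₀, hL₀M, hL₀, hdec⟩ := exists_fusion
    (fun t N => Accepts D (β ∪ t) N ∨ Rejects D (β ∪ t) N)
    (fun _ _ _ hLN => Or.imp (·.mono hLN) (·.mono hLN))
    (fun _ _ hN => exists_accepts_or_rejects _ hN) hM
  by_cases hacc : Accepts D β L₀
  · exact ⟨L₀, hL₀M, hL₀, hacc⟩
  obtain ⟨L₁, hL₁L₀, hL₁, hext⟩ := exists_fusion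
    (fun t N => ↑t ⊆ L₀ → Rejects D (β ∪ t) (tail L₀ t) →
      ∀ n ∈ N ∩ tail L₀ t, Rejects D (β ∪ insert n t) (tail L₀ (insert n t)))
    (fun _ _ _ hLN h ht hrej n hn => h ht hrej n ⟨hLN hn.1, hn.2⟩)
    (fun t N hN => by
      by_cases h : ↑t ⊆ L₀ ∧ Rejects D (β ∪ t) (tail L₀ t)
      · refine ⟨_, sdiff_subset, hN.sdiff (finite_not_rejects_insert hdec h.1 h.2), ?_⟩
        exact fun _ _ n hn => not_not.1 fun hnrej => hn.1.2 ⟨hn.2, hnrej⟩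
      · exact ⟨N, subset_rfl, hN, fun ht hrej => absurd ⟨ht, hrej⟩ h⟩) hL₀
  have hrej : ∀ t : Finset ℕ, ↑t ⊆ L₁ → Rejects D (β ∪ t) (tail L₀ t) := by
    intro t
    induction t using Finset.induction_on_max with
    | empty =>
      intro _
      simpa [tail] using (hdec ∅ (by simp)).resolve_left (by simpa [tail] using hacc)
    | insert n t hnt ih =>
      intro ht
      rw [Finset.coe_insert, insert_subset_iff] at ht
      exact hext t ht.2 (ht.2.trans hL₁L₀) (ih ht.2) n ⟨⟨ht.1, hnt⟩, hL₁L₀ ht.1, hnt⟩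
  obtain ⟨X, hXL, hXD⟩ := hDd.inter_open_nonempty _ (isOpen_ellSet hL₁ β) (ellSet_nonempty hL₁ β)
  obtain ⟨t, ht, hnrej⟩ := exists_not_rejects_of_mem_isOpen hDo hXD hXL
  exact absurd ((hrej t ht).mono (tail_mono hL₁L₀ t)) hnrej

theorem exists_ellSet_subset_iInter {D : ℕ → Set InfNat} (hDo : ∀ k, IsOpen (D k))
    (hDd : ∀ k, Dense (D k)) (α : Finset ℕ) {M : Set ℕ} (hM : M.Infinite) :
    ∃ L ⊆ M, L.Infinite ∧ EllSet α L ⊆ ⋂ k, D k := by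
  obtain ⟨L, hLM, hL, hLD⟩ := exists_fusion
    (fun t N => ∀ k ∈ Finset.range (t.sup id + 1), EllSet (α ∪ t) N ⊆ D k)
    (fun _ _ _ hLN h k hk => (ellSet_mono hLN _).trans (h k hk))
    (fun t _ hN => exists_subset_forall_finset (fun k N => EllSet (α ∪ t) N ⊆ D k)
      (fun _ _ _ hLN h => (ellSet_mono hLN _).trans h)
      (fun k _ hN => exists_ellSet_subset_of_isOpen_of_dense (hDo k) (hDd k) _ hN) _ hN) hM
  refine ⟨L, hLM, hL, fun X hX => mem_iInter.2 fun k => ?_⟩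
  -- cut `X` just above an element `m > k` of `X \ α`, so that the stem has maximum `≥ k`
  obtain ⟨m, hm, hkm⟩ := (X.2.sdiff α.finite_toSet).exists_gt k
  obtain ⟨t, ht⟩ :=
    ((finite_Iio (m + 1)).inter_of_right X.1).sdiff (t := ↑α) |>.exists_finset_coe
  have hmt : m ∈ t := by simp [← Finset.mem_coe, ht, hm.1, hm.2]
  refine hLD t (coe_subset_of_eq_inter_sdiff hX ht) k ?_ (mem_ellSet_union_tail hX ht)
  exact Finset.mem_range.2 (Nat.lt_succ_of_le (hkm.le.trans (Finset.le_sup (f := id) hmt)))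

end Topology

end Ellentuck

/-- Corollary 4.8: if `U` is meager in the Ellentuck topology, then for every infinite `M`
and finite `α` there is an infinite `L ⊆ M` with `[α, L] ⊆ [ℕ] \ U`. -/
theorem meager_ramsey_null (U : Set InfNat) (hU : @IsMeagre InfNat EllentuckTop U)
    (M : Set ℕ) (hM : M.Infinite) (α : Finset ℕ) :
    ∃ L ⊆ M, L.Infinite ∧ EllSet α L ⊆ Uᶜ := by
  let := EllentuckTop
  obtain ⟨D, hDo, hDd, hDU⟩ := exists_isOpen_dense_iInter_subset_of_mem_residual hU
  obtain ⟨L, hLM, hL, hLD⟩ := Ellentuck.exists_ellSet_subset_iInter hDo hDd α hM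
  exact ⟨L, hLM, hL, hLD.trans hDU⟩
end

section
/- Let U be a family of infinite subsets of ℕ that is closed in the topology of pointwise convergence, and M an infinite subset of ℕ. Then either there exists an infinite L ⊆ M with every infinite subset of L belonging to U, or there exists an infinite L ⊆ M such that for every infinite subset I of L there exists a finite initial segment s of I with [s, ℕ] ⊆ [ℕ] \ U. -/
namespace NW

/-- `s` is a finite initial segment of `X`. -/
def seg (s : Finset ℕ) (X : Set ℕ) : Prop :=
  ↑s ⊆ X ∧ ∀ a ∈ s, ∀ b ∈ X, b ∉ s → a < b

/-- `A` accepts `s` (w.r.t. the family `D`). -/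
def acc (D : Set (Finset ℕ)) (A : Set ℕ) (s : Finset ℕ) : Prop :=
  ∀ B : Set ℕ, B.Infinite → B ⊆ A → (∀ a ∈ s, ∀ b ∈ B, a < b) →
    ∃ t ∈ D, seg t (↑s ∪ B)

/-- `A` rejects `s`: no infinite subset of `A` accepts `s`. -/
def rej (D : Set (Finset ℕ)) (A : Set ℕ) (s : Finset ℕ) : Prop :=
  ∀ A' : Set ℕ, A'.Infinite → A' ⊆ A → ¬ acc D A' s

/-- The part of `X` strictly above all elements of `s`. -/
def tl (s : Finset ℕ) (X : Set ℕ) : Set ℕ := {x ∈ X | ∀ y ∈ s, y < x}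

lemma tl_subset (s : Finset ℕ) (X : Set ℕ) : tl s X ⊆ X := fun _ h => h.1

lemma tl_mono {X Y : Set ℕ} (s : Finset ℕ) (h : X ⊆ Y) : tl s X ⊆ tl s Y :=
  fun x hx => ⟨h hx.1, hx.2⟩

lemma tl_infinite {X : Set ℕ} (s : Finset ℕ) (hX : X.Infinite) : (tl s X).Infinite := by
  have h1 : (⋃ y ∈ (s : Set ℕ), Set.Iic y).Finite :=
    Set.Finite.biUnion s.finite_toSet (fun y _ => Set.finite_Iic y)
  refine (hX.diff h1).mono ?_
  rintro x ⟨hx1, hx2⟩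
  refine ⟨hx1, fun y hy => ?_⟩
  by_contra h
  exact hx2 (Set.mem_biUnion (Finset.mem_coe.2 hy) (by simpa using Nat.le_of_not_lt h))

lemma acc_transfer {D : Set (Finset ℕ)} {A A' : Set ℕ} {s : Finset ℕ}
    (hsub : tl s A' ⊆ A) (h : acc D A s) : acc D A' s := by
  intro B hB hBA hBs
  exact h B hB (fun x hx => hsub ⟨hBA hx, fun y hy => hBs y hy x hx⟩) hBs

lemma acc_mono {D : Set (Finset ℕ)} {A A' : Set ℕ} {s : Finset ℕ}
    (hsub : A' ⊆ A) (h : acc D A s) : acc D A' s :=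
  acc_transfer (fun x hx => hsub hx.1) h

lemma rej_transfer {D : Set (Finset ℕ)} {A A' : Set ℕ} {s : Finset ℕ}
    (hsub : tl s A' ⊆ A) (h : rej D A s) : rej D A' s := by
  intro A'' hA'' hsub'' hacc
  have h1 : tl s A'' ⊆ A := fun x hx => hsub (tl_mono s hsub'' hx)
  have h2 : (tl s A'').Infinite := tl_infinite s hA''
  have h3 : acc D (tl s A'') s := acc_transfer (fun x hx => hx.1.1) hacc
  exact h (tl s A'') h2 h1 h3

lemma rej_mono {D : Set (Finset ℕ)} {A A' : Set ℕ} {s : Finset ℕ}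
    (hsub : A' ⊆ A) (h : rej D A s) : rej D A' s :=
  rej_transfer (fun x hx => hsub hx.1) h

lemma acc_of_mem {D : Set (Finset ℕ)} {A : Set ℕ} {t : Finset ℕ} (ht : t ∈ D) :
    acc D A t := by
  intro B hB hBA hBs
  refine ⟨t, ht, Set.subset_union_left, ?_⟩
  intro a ha b hb hbt
  rcases hb with hb | hb
  · exact absurd hb hbt
  · exact hBs a ha b hb

lemma decideOne (D : Set (Finset ℕ)) {A : Set ℕ} (s : Finset ℕ) (hA : A.Infinite) :
    ∃ A', A' ⊆ A ∧ A'.Infinite ∧ (acc D A' s ∨ rej D A' s) := by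
  by_cases h : rej D A s
  · exact ⟨A, subset_rfl, hA, Or.inr h⟩
  · simp only [rej, not_forall, not_not] at h
    obtain ⟨A', h1, h2, h3⟩ := h
    exact ⟨A', h2, h1, Or.inl h3⟩

lemma decideFinset (D : Set (Finset ℕ)) {A : Set ℕ} (hA : A.Infinite)
    (F : Finset (Finset ℕ)) :
    ∃ A', A' ⊆ A ∧ A'.Infinite ∧ ∀ s ∈ F, acc D A' s ∨ rej D A' s := by
  induction F using Finset.induction_on with
  | empty => exact ⟨A, subset_rfl, hA, by simp⟩
  | insert _ _ ha ih =>
    obtain ⟨A1, hA1, hA1inf, hA1dec⟩ := ih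
    obtain ⟨A2, hA2, hA2inf, hA2dec⟩ := decideOne D _ hA1inf
    refine ⟨A2, subset_trans hA2 hA1, hA2inf, ?_⟩
    intro s hs
    rcases Finset.mem_insert.1 hs with rfl | hs
    · exact hA2dec
    · exact (hA1dec s hs).imp (acc_mono hA2) (rej_mono hA2)


lemma step_ex (D : Set (Finset ℕ)) {A : Set ℕ} (hA : A.Infinite) :
    ∃ A', A' ⊆ A ∧ A'.Infinite ∧ (∀ x ∈ A', sInf A < x) ∧
      ∀ s ∈ (Finset.range (sInf A + 1)).powerset, acc D A' s ∨ rej D A' s := by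
  have h1 : (A \ Set.Iic (sInf A)).Infinite := hA.diff (Set.finite_Iic _)
  obtain ⟨A', h2, h3, h4⟩ := decideFinset D h1 ((Finset.range (sInf A + 1)).powerset)
  refine ⟨A', fun x hx => (h2 hx).1, h3, fun x hx => ?_, h4⟩
  have := (h2 hx).2
  simpa using Nat.lt_of_not_le (by simpa using this)

lemma exists_decisive (D : Set (Finset ℕ)) {M : Set ℕ} (hM : M.Infinite) :
    ∃ L, L ⊆ M ∧ L.Infinite ∧ ∀ s : Finset ℕ, ↑s ⊆ L → (acc D L s ∨ rej D L s) := by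
  obtain ⟨A0, hA0M, hA0inf, hA0dec⟩ := decideOne D (∅ : Finset ℕ) hM
  let step : {A : Set ℕ // A.Infinite} → {A : Set ℕ // A.Infinite} := fun A =>
    ⟨Classical.choose (step_ex D A.2), (Classical.choose_spec (step_ex D A.2)).2.1⟩
  have stepspec : ∀ A : {A : Set ℕ // A.Infinite}, (step A).1 ⊆ A.1 ∧
      (∀ x ∈ (step A).1, sInf A.1 < x) ∧
      ∀ s ∈ (Finset.range (sInf A.1 + 1)).powerset, acc D (step A).1 s ∨ rej D (step A).1 s := by
    intro A
    obtain ⟨h1, _, h3, h4⟩ := Classical.choose_spec (step_ex D A.2)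
    exact ⟨h1, h3, h4⟩
  set f : ℕ → {A : Set ℕ // A.Infinite} := fun n => step^[n] ⟨A0, hA0inf⟩ with hfdef
  have hf : ∀ n, f (n + 1) = step (f n) := fun n => Function.iterate_succ_apply' step n _
  set a : ℕ → ℕ := fun n => sInf (f n).1 with hadef
  have hmem : ∀ n, a n ∈ (f n).1 := fun n => Nat.sInf_mem (f n).2.nonempty
  have hstep_sub : ∀ n, (f (n + 1)).1 ⊆ (f n).1 := by
    intro n; rw [hf n]; exact (stepspec (f n)).1
  have hchain : ∀ m n, m ≤ n → (f n).1 ⊆ (f m).1 := by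
    intro m n h
    induction n, h using Nat.le_induction with
    | base => exact subset_rfl
    | succ n hmn ih => exact subset_trans (hstep_sub n) ih
  have hstrict : StrictMono a := by
    apply strictMono_nat_of_lt_succ
    intro n
    have h1 := hmem (n + 1)
    rw [hf n] at h1
    exact (stepspec (f n)).2.1 _ h1
  have hrange0 : ∀ n, a n ∈ A0 := fun n => hchain 0 n (Nat.zero_le n) (hmem n)
  refine ⟨Set.range a, ?_, Set.infinite_range_of_injective hstrict.injective, ?_⟩
  · rintro x ⟨n, rfl⟩; exact hA0M (hrange0 n)
  · intro s hs
    rcases s.eq_empty_or_nonempty with rfl | hne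
    · have hsub : tl ∅ (Set.range a) ⊆ A0 := by
        rintro x ⟨⟨n, rfl⟩, -⟩; exact hrange0 n
      exact hA0dec.imp (acc_transfer hsub) (rej_transfer hsub)
    · obtain ⟨n, hn⟩ := hs (Finset.mem_coe.2 (s.max'_mem hne))
      have hdec := (stepspec (f n)).2.2 s (by
        rw [Finset.mem_powerset]
        intro x hx
        rw [Finset.mem_range]
        have h1 : x ≤ s.max' hne := s.le_max' x hx
        have h2 : sInf (f n).1 = a n := rfl
        omega)
      rw [← hf n] at hdec
      have hsub : tl s (Set.range a) ⊆ (f (n + 1)).1 := by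
        rintro x ⟨⟨m, rfl⟩, hx⟩
        have h1 : a n < a m := by
          rw [hn]; exact hx _ (s.max'_mem hne)
        have h2 : n < m := hstrict.lt_iff_lt.1 h1
        exact hchain (n + 1) m h2 (hmem m)
      exact hdec.imp (acc_transfer hsub) (rej_transfer hsub)


lemma badfin (D : Set (Finset ℕ)) {L : Set ℕ}
    {s : Finset ℕ} (hrej : rej D L s) :
    {x ∈ L | acc D L (insert x s)}.Finite := by
  by_contra hinf
  rw [← Set.not_infinite, not_not] at hinf
  have hB' : (tl s {x ∈ L | acc D L (insert x s)}).Infinite := tl_infinite s hinf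
  refine hrej (tl s {x ∈ L | acc D L (insert x s)}) hB' (fun x hx => hx.1.1) ?_
  intro C hC hCB hCs
  have hCne : C.Nonempty := hC.nonempty
  have hbC : sInf C ∈ C := Nat.sInf_mem hCne
  have hbB := hCB hbC
  have hacc : acc D L (insert (sInf C) s) := hbB.1.2
  have hC' : (C \ {sInf C}).Infinite := hC.diff (Set.finite_singleton _)
  have hord : ∀ a ∈ insert (sInf C) s, ∀ x ∈ C \ {sInf C}, a < x := by
    intro a ha x hx
    rcases Finset.mem_insert.1 ha with rfl | ha
    · exact Nat.lt_of_le_of_ne (Nat.sInf_le hx.1) (fun h => hx.2 h.symm)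
    · exact hCs a ha x hx.1
  obtain ⟨t, htD, htseg⟩ := hacc (C \ {sInf C}) hC' (fun x hx => (hCB hx.1).1.1) hord
  have hset : (↑(insert (sInf C) s) : Set ℕ) ∪ (C \ {sInf C}) = ↑s ∪ C := by
    ext x
    by_cases hxb : x = sInf C <;> simp [hxb, hbC] <;> tauto
  exact ⟨t, htD, hset ▸ htseg⟩

lemma dstep (D : Set (Finset ℕ)) {L : Set ℕ} (hL : L.Infinite)
    (hdec : ∀ s : Finset ℕ, ↑s ⊆ L → (acc D L s ∨ rej D L s))
    {F : Finset ℕ} (hFL : ↑F ⊆ L) (hQ : ∀ s ⊆ F, rej D L s) :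
    ∃ b ∈ L, (∀ x ∈ F, x < b) ∧ ∀ s ⊆ insert b F, rej D L s := by
  have hfin : (⋃ s ∈ (↑F.powerset : Set (Finset ℕ)), {x ∈ L | acc D L (insert x s)}).Finite := by
    refine Set.Finite.biUnion F.powerset.finite_toSet (fun s hs => ?_)
    exact badfin D (hQ s (Finset.mem_powerset.1 (Finset.mem_coe.1 hs)))
  have hfin2 : (⋃ x ∈ (F : Set ℕ), Set.Iic x).Finite :=
    Set.Finite.biUnion F.finite_toSet (fun _ _ => Set.finite_Iic _)
  obtain ⟨b, hb⟩ := (hL.diff (hfin.union hfin2)).nonempty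
  have hbL : b ∈ L := hb.1
  have hgt : ∀ x ∈ F, x < b := by
    intro x hx
    by_contra h
    exact hb.2 (Or.inr (Set.mem_biUnion (Finset.mem_coe.2 hx)
      (by simpa using Nat.le_of_not_lt h)))
  refine ⟨b, hbL, hgt, ?_⟩
  intro s hs
  have hsL : ↑s ⊆ L := by
    intro x hx
    rcases Finset.mem_insert.1 (hs (Finset.mem_coe.1 hx)) with rfl | h
    · exact hbL
    · exact hFL (Finset.mem_coe.2 h)
  by_cases hbs : b ∈ s
  · have hs' : s.erase b ⊆ F := by
      intro x hx
      rcases Finset.mem_insert.1 (hs (Finset.mem_of_mem_erase hx)) with rfl | h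
      · exact absurd rfl (Finset.ne_of_mem_erase hx)
      · exact h
    rcases hdec s hsL with hacc | hrej
    · exfalso
      apply hb.2
      refine Or.inl (Set.mem_biUnion (Finset.mem_coe.2 (Finset.mem_powerset.2 hs')) ?_)
      refine ⟨hbL, ?_⟩
      rwa [Finset.insert_erase hbs]
    · exact hrej
  · exact hQ s (fun x hx => by
      rcases Finset.mem_insert.1 (hs hx) with rfl | h
      · exact absurd hx hbs
      · exact h)

lemma finset_subset_iUnion {F : ℕ → Finset ℕ} (hmono : ∀ m n, m ≤ n → F m ⊆ F n)
    {t : Finset ℕ} (ht : ↑t ⊆ ⋃ n, (↑(F n) : Set ℕ)) : ∃ n, t ⊆ F n := by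
  classical
  induction t using Finset.induction_on with
  | empty => exact ⟨0, by simp⟩
  | @insert a t ha ih =>
    obtain ⟨n, hn⟩ := ih (subset_trans (by exact_mod_cast Finset.subset_insert a t) ht)
    have h1 : (a : ℕ) ∈ ⋃ n, (↑(F n) : Set ℕ) := ht (by simp)
    obtain ⟨m, hm⟩ := Set.mem_iUnion.1 h1
    refine ⟨max n m, Finset.insert_subset ?_ ?_⟩
    · exact hmono m _ (le_max_right n m) (Finset.mem_coe.1 hm)
    · exact subset_trans hn (hmono n _ (le_max_left n m))

lemma exists_reject_all (D : Set (Finset ℕ)) {L : Set ℕ} (hL : L.Infinite)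
    (hdec : ∀ s : Finset ℕ, ↑s ⊆ L → (acc D L s ∨ rej D L s))
    (hrej0 : rej D L ∅) :
    ∃ L', L' ⊆ L ∧ L'.Infinite ∧ ∀ t : Finset ℕ, ↑t ⊆ L' → rej D L t := by
  classical
  let β := {F : Finset ℕ // ↑F ⊆ L ∧ ∀ s ⊆ F, rej D L s}
  have hstepex : ∀ F : β, ∃ G : β, F.1 ⊆ G.1 ∧ F.1.card < G.1.card := by
    intro F
    obtain ⟨b, hbL, hgt, hall⟩ := dstep D hL hdec F.2.1 F.2.2
    have hbF : b ∉ F.1 := fun h => lt_irrefl b (hgt b h)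
    refine ⟨⟨insert b F.1, ?_, hall⟩, Finset.subset_insert b F.1, ?_⟩
    · intro x hx
      rcases Finset.mem_insert.1 (Finset.mem_coe.1 hx) with rfl | h
      · exact hbL
      · exact F.2.1 (Finset.mem_coe.2 h)
    · rw [Finset.card_insert_of_notMem hbF]; omega
  let g : β → β := fun F => Classical.choose (hstepex F)
  have hg : ∀ F, F.1 ⊆ (g F).1 ∧ F.1.card < (g F).1.card :=
    fun F => Classical.choose_spec (hstepex F)
  have hQ0 : (↑(∅ : Finset ℕ) : Set ℕ) ⊆ L ∧ ∀ s ⊆ (∅ : Finset ℕ), rej D L s := by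
    refine ⟨by simp, fun s hs => ?_⟩
    rw [Finset.subset_empty] at hs
    subst hs; exact hrej0
  set f : ℕ → β := fun n => g^[n] ⟨∅, hQ0⟩ with hfdef
  have hf : ∀ n, f (n + 1) = g (f n) := fun n => Function.iterate_succ_apply' g n _
  have hmono : ∀ m n, m ≤ n → (f m).1 ⊆ (f n).1 := by
    intro m n h
    induction n, h using Nat.le_induction with
    | base => exact subset_rfl
    | succ n hmn ih => exact subset_trans ih (by rw [hf n]; exact (hg (f n)).1)
  have hcard : ∀ n, n ≤ (f n).1.card := by
    intro n
    induction n with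
    | zero => omega
    | succ n ih =>
      have := (hg (f n)).2
      rw [← hf n] at this
      omega
  refine ⟨⋃ n, (↑(f n).1 : Set ℕ), ?_, ?_, ?_⟩
  · intro x hx
    obtain ⟨n, hn⟩ := Set.mem_iUnion.1 hx
    exact (f n).2.1 hn
  · intro hfin
    have h1 : (f (hfin.toFinset.card + 1)).1 ⊆ hfin.toFinset := by
      intro x hx
      rw [Set.Finite.mem_toFinset]
      exact Set.mem_iUnion.2 ⟨_, Finset.mem_coe.2 hx⟩
    have h2 := Finset.card_le_card h1
    have h3 := hcard (hfin.toFinset.card + 1)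
    omega
  · intro t ht
    obtain ⟨n, hn⟩ := finset_subset_iUnion (fun m n h => hmono m n h) ht
    exact (f n).2.2 t hn

theorem nw_comb (D : Set (Finset ℕ)) {M : Set ℕ} (hM : M.Infinite) :
    ∃ L, L ⊆ M ∧ L.Infinite ∧
      ((∀ t : Finset ℕ, ↑t ⊆ L → t ∉ D) ∨
       (∀ I : Set ℕ, I ⊆ L → I.Infinite → ∃ t ∈ D, seg t I)) := by
  obtain ⟨L, hLM, hLinf, hdec⟩ := exists_decisive D hM
  rcases hdec ∅ (by simp) with hacc | hrej
  · refine ⟨L, hLM, hLinf, Or.inr ?_⟩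
    intro I hIL hIinf
    obtain ⟨t, htD, htseg⟩ := hacc I hIinf hIL (by simp)
    refine ⟨t, htD, ?_⟩
    rwa [show ((↑(∅ : Finset ℕ) : Set ℕ) ∪ I) = I by simp] at htseg
  · obtain ⟨L', hL'L, hL'inf, hrejall⟩ := exists_reject_all D hLinf hdec hrej
    refine ⟨L', subset_trans hL'L hLM, hL'inf, Or.inl ?_⟩
    intro t htL' htD
    exact hrejall t htL' L' hL'inf hL'L (acc_of_mem htD)

end NW

/-- The classical Nash-Williams partition theorem: if `U` is a pointwise closed family of
infinite subsets of `ℕ` and `M` is infinite, then either some infinite `L ⊆ M` has all its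
infinite subsets in `U`, or some infinite `L ⊆ M` is such that every infinite `I ⊆ L` has a
finite initial segment `s` with `[s, ℕ]` disjoint from `U`. -/
theorem nash_williams (U : Set (Set ℕ)) (hInf : ∀ A ∈ U, A.Infinite)
    (hclosed : ∀ A : Set ℕ, A.Infinite → charSet A ∈ closure (charSet '' U) → A ∈ U)
    (M : Set ℕ) (hM : M.Infinite) :
    (∃ L ⊆ M, L.Infinite ∧ ∀ I ⊆ L, I.Infinite → I ∈ U) ∨
    (∃ L ⊆ M, L.Infinite ∧ ∀ I ⊆ L, I.Infinite →
      ∃ s : Finset ℕ, ↑s ⊆ I ∧ (∀ a ∈ s, ∀ b ∈ I, b ∉ s → a < b) ∧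
        ∀ N : Set ℕ, N.Infinite → ↑s ⊆ N → (∀ a ∈ s, ∀ b ∈ N, b ∉ s → a < b) → N ∉ U) := by
  classical
  set D : Set (Finset ℕ) :=
    {s | ∀ N : Set ℕ, N.Infinite → ↑s ⊆ N → (∀ a ∈ s, ∀ b ∈ N, b ∉ s → a < b) → N ∉ U}
    with hD
  obtain ⟨L, hLM, hLinf, h⟩ := NW.nw_comb D hM
  rcases h with h | h
  · left
    refine ⟨L, hLM, hLinf, ?_⟩
    intro I hIL hIinf
    apply hclosed I hIinf
    have key : ∀ k : ℕ, ∃ N : Set ℕ, N ∈ U ∧ ∀ n ≤ k, (n ∈ N ↔ n ∈ I) := by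
      intro k
      obtain ⟨m, hmI, hkm⟩ := hIinf.exists_gt k
      have hfin : (I ∩ Set.Iic m).Finite := Set.Finite.inter_of_right (Set.finite_Iic m) I
      have hsI : ↑hfin.toFinset ⊆ I := by
        intro x hx
        exact (hfin.mem_toFinset.1 (Finset.mem_coe.1 hx)).1
      have hsL : ↑hfin.toFinset ⊆ L := subset_trans hsI hIL
      have hms : m ∈ hfin.toFinset := hfin.mem_toFinset.2 ⟨hmI, le_refl m⟩
      have hnotD := h hfin.toFinset hsL
      rw [hD, Set.mem_setOf_eq] at hnotD
      push_neg at hnotD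
      obtain ⟨N, hN1, hN2, hN3, hN4⟩ := hnotD
      refine ⟨N, hN4, ?_⟩
      intro n hn
      constructor
      · intro hnN
        by_cases hns : n ∈ hfin.toFinset
        · exact hsI (Finset.mem_coe.2 hns)
        · have := hN3 m hms n hnN hns
          omega
      · intro hnI
        exact hN2 (Finset.mem_coe.2 (hfin.mem_toFinset.2 ⟨hnI, Set.mem_Iic.2 (by omega)⟩))
    choose N hNU hNagree using key
    have htend : Filter.Tendsto (fun k => charSet (N k)) Filter.atTop (nhds (charSet I)) := by
      rw [tendsto_pi_nhds]
      intro n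
      have hev : ∀ᶠ k in Filter.atTop, charSet I n = charSet (N k) n := by
        filter_upwards [Filter.eventually_ge_atTop n] with k hk
        exact (decide_eq_decide.2 (hNagree k n hk)).symm
      exact Filter.Tendsto.congr' hev tendsto_const_nhds
    exact mem_closure_of_tendsto htend
      (Filter.Eventually.of_forall (fun k => Set.mem_image_of_mem _ (hNU k)))
  · right
    refine ⟨L, hLM, hLinf, ?_⟩
    intro I hIL hIinf
    obtain ⟨t, htD, ht1, ht2⟩ := h I hIL hIinf
    exact ⟨t, ht1, ht2, htD⟩
end
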